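/- arXiv:0910.1148 — 9 statements merged into one kernel-verified Lean document; each statement's English description precedes it below -/
import Mathlib

section
/- Every integral representation of a finite 2-group on ℤ³ has a G-invariant subgroup of ℤ-rank 1, i.e. a sublattice of rank 1 stable under the action. -/
/-!
Unless ρ is scalar (when every line is stable), the image of G in `GL₃(ℤ) ⧸ {±1}` is a nontrivial
2-group, so its centre contains an involution. A lift `z` of it satisfies `z ≠ ±1`, `z² = ±1`, and
commutes with every `ρ g` up to sign. As 3 is odd, determinants rule out both minus signs, so `z` is
an involution commuting with `ρ(G)`. Its eigenlattices `ker (z ∓ 1)` are then G-stable and nonzero,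
and their ranks add up to 3 because they meet trivially and their sum contains `2 ℤ³`; hence one of
them has rank 1.
-/

open Module Module.End Matrix.GeneralLinearGroup

namespace Module.End

variable {R M : Type*} [CommRing R] [AddCommGroup M] [Module R M] {f : End R M}

lemma add_apply_mem_eigenspace_one (hf : f * f = 1) (x : M) : x + f x ∈ eigenspace f 1 := by
  have hx : f (f x) = x := congr($hf x)
  rw [mem_eigenspace_iff, one_smul, map_add, hx, add_comm]

lemma sub_apply_mem_eigenspace_neg_one (hf : f * f = 1) (x : M) :
    x - f x ∈ eigenspace f (-1) := by
  have hx : f (f x) = x := congr($hf x)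
  rw [mem_eigenspace_iff, neg_one_smul, map_sub, hx, neg_sub]

lemma eq_neg_one_of_eigenspace_one_eq_bot (hf : f * f = 1) (h : eigenspace f 1 = ⊥) :
    f = -1 := by
  ext x
  have hx := add_apply_mem_eigenspace_one hf x
  rw [h, Submodule.mem_bot] at hx
  simpa [eq_neg_iff_add_eq_zero, add_comm] using hx

lemma eq_one_of_eigenspace_neg_one_eq_bot (hf : f * f = 1) (h : eigenspace f (-1) = ⊥) :
    f = 1 := by
  ext x
  have hx := sub_apply_mem_eigenspace_neg_one hf x
  rw [h, Submodule.mem_bot, sub_eq_zero] at hx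
  exact hx.symm

lemma finrank_eigenspace_one_add_finrank_eigenspace_neg_one [IsDomain R] [IsNoetherianRing R]
    [NeZero (2 : R)] [Module.Finite R M] [IsTorsionFree R M] (hf : f * f = 1) :
    finrank R (eigenspace f 1) + finrank R (eigenspace f (-1)) = finrank R M := by
  set s := eigenspace f 1
  set t := eigenspace f (-1)
  have hdisj : s ⊓ t = ⊥ := by
    have h1 : (1 : R) ≠ -1 := by
      rw [ne_eq, eq_neg_iff_add_eq_zero, one_add_one_eq_two]
      exact two_ne_zero
    exact (disjoint_genEigenspace f h1 1 1).eq_bot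
  have hsup : Module.rank R ↥(s ⊔ t) = Module.rank R M := by
    refine le_antisymm (Submodule.rank_le _) (LinearMap.rank_le_of_injective
      ((2 : R) • LinearMap.id |>.codRestrict (s ⊔ t) fun x => ?_) fun x y hxy => ?_)
    · rw [LinearMap.smul_apply, LinearMap.id_apply, two_smul,
        show x + x = (x + f x) + (x - f x) by abel]
      exact Submodule.add_mem_sup (add_apply_mem_eigenspace_one hf x)
        (sub_apply_mem_eigenspace_neg_one hf x)
    · exact smul_right_injective M (two_ne_zero (α := R)) congr($hxy.1)
  have := Submodule.rank_sup_add_rank_inf_eq s t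
  rw [hsup, hdisj, rank_bot, add_zero, ← finrank_eq_rank, ← finrank_eq_rank,
    ← finrank_eq_rank] at this
  exact_mod_cast this.symm

lemma exists_finrank_eigenspace_eq_one [IsDomain R] [IsNoetherianRing R] [NeZero (2 : R)]
    [Module.Finite R M] [IsTorsionFree R M] (hM : finrank R M = 3) (hf : f * f = 1)
    (hf₁ : f ≠ 1) (hf₂ : f ≠ -1) : ∃ μ : R, finrank R (eigenspace f μ) = 1 := by
  have h₁ : 1 ≤ finrank R (eigenspace f 1) :=
    Submodule.one_le_finrank_iff.mpr fun h => hf₂ (eq_neg_one_of_eigenspace_one_eq_bot hf h)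
  have h₂ : 1 ≤ finrank R (eigenspace f (-1)) :=
    Submodule.one_le_finrank_iff.mpr fun h => hf₁ (eq_one_of_eigenspace_neg_one_eq_bot hf h)
  have := finrank_eigenspace_one_add_finrank_eigenspace_neg_one hf
  by_cases h : finrank R (eigenspace f 1) = 1
  · exact ⟨1, h⟩
  · exact ⟨-1, by omega⟩

lemma map_eigenspace_of_commute {u : (End R M)ˣ} (h : Commute f u) (μ : R) :
    (eigenspace f μ).map (u : End R M) = eigenspace f μ := by
  refine le_antisymm (Submodule.map_le_iff_le_comap.mpr fun x hx =>
    mapsTo_genEigenspace_of_comm h μ 1 hx) fun x hx => ⟨(↑u⁻¹ : End R M) x, ?_, ?_⟩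
  · exact mapsTo_genEigenspace_of_comm h.units_inv_right μ 1 hx
  · rw [← Module.End.mul_apply, Units.mul_inv, Module.End.one_apply]

end Module.End

section SignQuotient

variable {A : Type*} [Group A] [HasDistribNeg A]

lemma mem_zpowers_neg_one_iff {a : A} : a ∈ Subgroup.zpowers (-1 : A) ↔ a = 1 ∨ a = -1 := by
  refine ⟨?_, ?_⟩
  · rintro ⟨k, rfl⟩
    rcases Int.even_or_odd k with hk | hk
    · exact .inl hk.neg_one_zpow
    · exact .inr hk.neg_one_zpow
  · rintro (rfl | rfl)
    · exact Subgroup.one_mem _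
    · exact Subgroup.mem_zpowers _

instance : (Subgroup.zpowers (-1 : A)).Normal where
  conj_mem n hn g := by
    rcases mem_zpowers_neg_one_iff.mp hn with rfl | rfl <;> simp

end SignQuotient

theorem IsPGroup.exists_orderOf_eq_prime_commute {p : ℕ} [Fact p.Prime] {G Q : Type*} [Group G]
    [Finite G] [Group Q] (hG : IsPGroup p G) (φ : G →* Q) (hφ : φ.range ≠ ⊥) :
    ∃ g : G, orderOf (φ g) = p ∧ ∀ h : G, Commute (φ g) (φ h) := by
  have hH : IsPGroup p φ.range := hG.of_surjective _ φ.rangeRestrict_surjective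
  have : Finite φ.range := .of_surjective _ φ.rangeRestrict_surjective
  have : Nontrivial φ.range := (Subgroup.nontrivial_iff_ne_bot _).mpr hφ
  have := hH.center_nontrivial
  have hp : p ∣ Nat.card (Subgroup.center φ.range) :=
    ((hH.to_subgroup _).card_eq_or_dvd).resolve_left Finite.one_lt_card.ne'
  obtain ⟨c, hc⟩ := exists_prime_orderOf_dvd_card' p hp
  obtain ⟨g, hg⟩ := (c : φ.range).2
  refine ⟨g, by rw [hg, Subgroup.orderOf_coe, Subgroup.orderOf_coe, hc], fun h => ?_⟩
  have := Subgroup.mem_center_iff.mp c.2 (φ.rangeRestrict h)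
  rw [hg]
  exact congr(Subtype.val $this).symm

theorem IsPGroup.exists_central_involution_mod_neg_one {G A : Type*} [Group G] [Finite G] [Group A]
    [HasDistribNeg A] (hG : IsPGroup 2 G) (ρ : G →* A) (hρ : ∃ g, ρ g ≠ 1 ∧ ρ g ≠ -1) :
    ∃ g : G, ρ g ≠ 1 ∧ ρ g ≠ -1 ∧ (ρ g ^ 2 = 1 ∨ ρ g ^ 2 = -1) ∧
      ∀ h : G, ρ g * ρ h = ρ h * ρ g ∨ ρ g * ρ h = -(ρ h * ρ g) := by
  have : Fact (Nat.Prime 2) := ⟨Nat.prime_two⟩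
  let N := Subgroup.zpowers (-1 : A)
  let φ := (QuotientGroup.mk' N).comp ρ
  have hφ (g : G) : φ g = 1 ↔ ρ g = 1 ∨ ρ g = -1 := by
    rw [← mem_zpowers_neg_one_iff]
    exact QuotientGroup.eq_one_iff _
  obtain ⟨g₀, hg₀⟩ := hρ
  have hrange : φ.range ≠ ⊥ := fun h =>
    not_or.mpr hg₀ <| (hφ g₀).mp <| by rw [MonoidHom.range_eq_bot_iff.mp h, MonoidHom.one_apply]
  obtain ⟨g, hg, hcomm⟩ := hG.exists_orderOf_eq_prime_commute φ hrange
  have hg₁ : ¬ (ρ g = 1 ∨ ρ g = -1) := by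
    rw [← hφ, ← orderOf_eq_one_iff, hg]
    decide
  refine ⟨g, fun h => hg₁ (.inl h), fun h => hg₁ (.inr h), ?_, fun h => ?_⟩
  · have := pow_orderOf_eq_one (φ g)
    rwa [hg, ← map_pow, hφ, map_pow] at this
  · have : QuotientGroup.mk' N (ρ h * ρ g) = QuotientGroup.mk' N (ρ g * ρ h) := by
      rw [map_mul, map_mul]
      exact (hcomm h).eq.symm
    obtain ⟨c, hc, hmul⟩ := (QuotientGroup.mk'_eq_mk' N).mp this
    rcases mem_zpowers_neg_one_iff.mp hc with rfl | rfl
    · exact .inl (by rw [← hmul, mul_one])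
    · exact .inr (by rw [← hmul, mul_neg_one])

namespace Matrix.GeneralLinearGroup

variable {n R : Type*} [Fintype n] [DecidableEq n] [CommRing R] [CharZero R]

lemma ne_neg_of_det_eq (hn : Odd (Fintype.card n)) {a b : GL n R} (h : det a = det b) :
    a ≠ -b := by
  rintro rfl
  have : det (-b) = -det b := Units.ext (by simp [Matrix.det_neg, hn.neg_one_pow])
  exact units_ne_neg_self _ (h.symm.trans this)

theorem exists_involution_commute_of_isPGroup {G : Type*} [Group G] [Finite G]
    (hn : Odd (Fintype.card n)) (hG : IsPGroup 2 G) (ρ : G →* GL n ℤ)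
    (hρ : ∃ g, ρ g ≠ 1 ∧ ρ g ≠ -1) :
    ∃ z : GL n ℤ, z * z = 1 ∧ z ≠ 1 ∧ z ≠ -1 ∧ ∀ g : G, Commute z (ρ g) := by
  obtain ⟨g, hg₁, hg₂, hsq, hcomm⟩ := hG.exists_central_involution_mod_neg_one ρ hρ
  refine ⟨ρ g, ?_, hg₁, hg₂, fun h => (hcomm h).resolve_right ?_⟩
  · rw [← sq]
    refine hsq.resolve_right fun h => ne_neg_of_det_eq hn (b := 1) ?_ h
    rw [map_pow, Int.units_sq, map_one]
  · exact ne_neg_of_det_eq hn (by rw [map_mul, map_mul, mul_comm])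

end Matrix.GeneralLinearGroup

theorem stmt_2 (G : Type*) [Group G] [Finite G] (hG : IsPGroup 2 G)
    (ρ : G →* Matrix.GeneralLinearGroup (Fin 3) ℤ) :
    ∃ L : Submodule ℤ (Fin 3 → ℤ), Module.rank ℤ L = 1 ∧
      ∀ g : G, L.map (Matrix.mulVecLin (ρ g : Matrix (Fin 3) (Fin 3) ℤ)) = L := by
  by_cases hscalar : ∀ g, ρ g = 1 ∨ ρ g = -1
  · refine ⟨ℤ ∙ Pi.single 0 1, ?_, fun g => ?_⟩
    · rw [rank_span_set (LinearIndepOn.singleton (v := id) (by simp)), Cardinal.mk_singleton]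
    · rcases hscalar g with h | h <;> simp [h, Submodule.map_neg]
  push Not at hscalar
  obtain ⟨z, hzz, hz₁, hz₂, hz⟩ :=
    exists_involution_commute_of_isPGroup (by decide) hG ρ hscalar
  let f : End ℤ (Fin 3 → ℤ) := toLin z
  have hff : f * f = 1 := by rw [← Units.val_mul, ← map_mul, hzz, map_one, Units.val_one]
  have hf₁ : f ≠ 1 := fun h => hz₁ (toLin.map_eq_one_iff.mp (Units.val_eq_one.mp h))
  have hf₂ : f ≠ -1 := fun h => hz₂ <| Units.ext <| Matrix.toLin'.injective <| by
    rw [Units.val_neg, Units.val_one, map_neg, Matrix.toLin'_one, Matrix.toLin'_apply',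
      ← coe_toLin]
    exact h
  obtain ⟨μ, hμ⟩ := exists_finrank_eigenspace_eq_one (by simp) hff hf₁ hf₂
  refine ⟨eigenspace f μ, by rw [← finrank_eq_rank, hμ, Nat.cast_one], fun g => ?_⟩
  rw [← coe_toLin]
  exact map_eigenspace_of_commute ((hz g).map toLin).units_val μ
end

section
/- Every finite 2-subgroup of GL₂(ℤ) has order at most 8. -/
open Matrix

abbrev M2' := Matrix (Fin 2) (Fin 2) ℤ
abbrev GL2' := Matrix.GeneralLinearGroup (Fin 2) ℤ

section IntHelpers

lemma int_sq_of_pow4 (a : ℤ) (h : a ^ 4 = 1) : a * a = 1 := by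
  have hle : a * a ≤ 1 := by nlinarith [sq_nonneg (a*a - 1)]
  have hge : 0 ≤ a * a := mul_self_nonneg a
  have : a * a = 0 ∨ a * a = 1 := by omega
  rcases this with h0 | h1
  · nlinarith
  · exact h1

lemma int_sq_of_pow8 (a : ℤ) (h : a ^ 8 = 1) : a * a = 1 := by
  have h4 : a ^ 4 = 1 := by
    have hle : a ^ 4 ≤ 1 := by nlinarith [sq_nonneg (a^4 - 1)]
    have hge : 0 ≤ a ^ 4 := by positivity
    have : a ^ 4 = 0 ∨ a ^ 4 = 1 := by omega
    rcases this with h0 | h1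
    · nlinarith
    · exact h1
  exact int_sq_of_pow4 a h4

lemma int_pm_of_sq (a : ℤ) (h : a * a = 1) : a = 1 ∨ a = -1 := by
  rcases Int.eq_one_or_neg_one_of_mul_eq_one' h with ⟨h1, _⟩ | ⟨h1, _⟩
  · exact Or.inl h1
  · exact Or.inr h1

lemma int_sq_ne_two (t : ℤ) : t * t ≠ 2 := by
  intro h
  have h1 : t ≤ 1 := by nlinarith [sq_nonneg (t-1)]
  have h2 : -1 ≤ t := by nlinarith [sq_nonneg (t+1)]
  nlinarith [mul_nonneg (by linarith : (0:ℤ) ≤ 1 - t) (by linarith : (0:ℤ) ≤ 1 + t)]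

end IntHelpers

section MatrixHelpers

lemma eq_ext {A B : M2'} :
    A = B ↔ (A 0 0 = B 0 0 ∧ A 0 1 = B 0 1 ∧ A 1 0 = B 1 0 ∧ A 1 1 = B 1 1) := by
  constructor
  · rintro rfl; exact ⟨rfl, rfl, rfl, rfl⟩
  · rintro ⟨h1,h2,h3,h4⟩; ext i j; fin_cases i <;> fin_cases j <;> assumption

lemma CH (M : M2') :
    M * M = (M 0 0 + M 1 1) • M - (M 0 0 * M 1 1 - M 0 1 * M 1 0) • (1 : M2') := by
  rw [eq_ext]
  simp only [Matrix.mul_apply, Fin.sum_univ_two, Matrix.sub_apply, Matrix.smul_apply,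
    Matrix.one_apply, smul_eq_mul]
  norm_num
  refine ⟨by ring, by ring, by ring, by ring⟩

lemma pow4_expand (M : M2') :
    M ^ 4 = ((M 0 0 + M 1 1) ^ 3 - 2 * (M 0 0 + M 1 1) * (M 0 0 * M 1 1 - M 0 1 * M 1 0)) • M
      + ((M 0 0 * M 1 1 - M 0 1 * M 1 0) ^ 2
          - (M 0 0 + M 1 1) ^ 2 * (M 0 0 * M 1 1 - M 0 1 * M 1 0)) • (1 : M2') := by
  have hch := CH M
  set t := M 0 0 + M 1 1
  set D := M 0 0 * M 1 1 - M 0 1 * M 1 0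
  have h4 : M ^ 4 = (M * M) * (M * M) := by
    rw [show (M*M)*(M*M) = (M^2)*(M^2) by rw [sq], ← pow_add]
  rw [h4, hch]
  have : (t • M - D • (1:M2')) * (t • M - D • (1:M2'))
      = (t*t) • (M*M) - (2*t*D) • M + (D*D) • (1:M2') := by
    simp only [sub_mul, mul_sub, smul_mul_assoc, mul_smul_comm, smul_smul, one_mul, mul_one]
    match_scalars <;> ring
  rw [this, hch]
  match_scalars <;> ring

lemma smul_one_sq (a : ℤ) : (a • (1 : M2')) * (a • (1 : M2')) = (a * a) • (1 : M2') := by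
  rw [smul_mul_assoc, mul_smul_comm, smul_smul, one_mul]

end MatrixHelpers

section Arith

/-- coefficient is nonzero when trace is nonzero -/
lemma coeff_ne (t D : ℤ) (hD : D * D = 1) (ht : t ≠ 0) : t ^ 3 - 2 * t * D ≠ 0 := by
  intro h
  have h2 : t * (t * t - 2 * D) = 0 := by linear_combination h
  rcases mul_eq_zero.mp h2 with h' | h'
  · exact ht h'
  · have h3 : t * t = 2 * D := by linarith
    rcases int_pm_of_sq D hD with hD1 | hD1
    · rw [hD1] at h3; exact int_sq_ne_two t (by linarith)
    · rw [hD1] at h3; nlinarith [sq_nonneg t]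

end Arith

section PowerLemmas

lemma four_lemma (M : M2') (h4 : M ^ 4 = 1) : M * M = 1 ∨ M * M = -1 := by
  have hDdet : M.det = M 0 0 * M 1 1 - M 0 1 * M 1 0 := by rw [Matrix.det_fin_two]
  have hdet : (M 0 0 * M 1 1 - M 0 1 * M 1 0) * (M 0 0 * M 1 1 - M 0 1 * M 1 0) = 1 := by
    have h1 : (M.det) ^ 4 = 1 := by rw [← Matrix.det_pow, h4, Matrix.det_one]
    rw [hDdet] at h1
    exact int_sq_of_pow4 _ h1
  have hp := pow4_expand M
  rw [h4] at hp
  have e01 : ((M 0 0 + M 1 1) ^ 3 - 2*(M 0 0 + M 1 1)*(M 0 0 * M 1 1 - M 0 1 * M 1 0)) * M 0 1 = 0 := by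
    have := congrFun (congrFun hp 0) 1
    simp only [Matrix.add_apply, Matrix.smul_apply, Matrix.one_apply, smul_eq_mul,
      Fin.zero_eq_one_iff, Nat.succ_ne_self, ite_false, ite_true, if_neg, OfNat.ofNat_ne_one,
      ne_eq, not_false_iff] at this
    linarith
  have e10 : ((M 0 0 + M 1 1) ^ 3 - 2*(M 0 0 + M 1 1)*(M 0 0 * M 1 1 - M 0 1 * M 1 0)) * M 1 0 = 0 := by
    have := congrFun (congrFun hp 1) 0
    simp only [Matrix.add_apply, Matrix.smul_apply, Matrix.one_apply, smul_eq_mul,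
      Fin.one_eq_zero_iff, Nat.succ_ne_self, ite_false, ite_true, if_neg, OfNat.ofNat_ne_one,
      ne_eq, not_false_iff] at this
    linarith
  have e00 : ((M 0 0 + M 1 1) ^ 3 - 2*(M 0 0 + M 1 1)*(M 0 0 * M 1 1 - M 0 1 * M 1 0)) * M 0 0
      + ((M 0 0 * M 1 1 - M 0 1 * M 1 0) ^ 2
          - (M 0 0 + M 1 1) ^ 2 * (M 0 0 * M 1 1 - M 0 1 * M 1 0)) = 1 := by
    have := congrFun (congrFun hp 0) 0
    simp only [Matrix.add_apply, Matrix.smul_apply, Matrix.one_apply, smul_eq_mul,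
      ite_true, if_pos] at this
    linarith
  have e11 : ((M 0 0 + M 1 1) ^ 3 - 2*(M 0 0 + M 1 1)*(M 0 0 * M 1 1 - M 0 1 * M 1 0)) * M 1 1
      + ((M 0 0 * M 1 1 - M 0 1 * M 1 0) ^ 2
          - (M 0 0 + M 1 1) ^ 2 * (M 0 0 * M 1 1 - M 0 1 * M 1 0)) = 1 := by
    have := congrFun (congrFun hp 1) 1
    simp only [Matrix.add_apply, Matrix.smul_apply, Matrix.one_apply, smul_eq_mul,
      ite_true, if_pos] at this
    linarith
  by_cases htz : M 0 0 + M 1 1 = 0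
  · have hch := CH M
    rw [htz] at hch
    simp only [zero_smul, zero_sub] at hch
    rcases int_pm_of_sq _ hdet with h | h
    · right
      rw [hch, h, eq_ext]
      simp only [Matrix.neg_apply, Matrix.smul_apply, Matrix.one_apply, smul_eq_mul]
      norm_num
    · left
      rw [hch, h, eq_ext]
      simp only [Matrix.neg_apply, Matrix.smul_apply, Matrix.one_apply, smul_eq_mul]
      norm_num
  · have hcoef := coeff_ne (M 0 0 + M 1 1) (M 0 0 * M 1 1 - M 0 1 * M 1 0) hdet htz
    have hb : M 0 1 = 0 := (mul_eq_zero.mp e01).resolve_left hcoef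
    have hc : M 1 0 = 0 := (mul_eq_zero.mp e10).resolve_left hcoef
    have had : M 0 0 = M 1 1 := by
      have h5 : ((M 0 0 + M 1 1) ^ 3 - 2*(M 0 0 + M 1 1)*(M 0 0 * M 1 1 - M 0 1 * M 1 0))
          * (M 0 0 - M 1 1) = 0 := by linear_combination e00 - e11
      have := (mul_eq_zero.mp h5).resolve_left hcoef
      linarith
    have hsc : M = (M 0 0) • (1 : M2') := by
      rw [eq_ext]
      simp only [Matrix.smul_apply, Matrix.one_apply, smul_eq_mul]
      norm_num
      exact ⟨hb, hc, had.symm⟩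
    obtain ⟨a, hsc'⟩ : ∃ a : ℤ, M = a • (1 : M2') := ⟨M 0 0, hsc⟩
    rw [hsc'] at h4 ⊢
    have ha4 : a ^ 4 = 1 := by
      rw [smul_pow, one_pow] at h4
      have := congrFun (congrFun h4 0) 0
      simp only [Matrix.smul_apply, Matrix.one_apply, smul_eq_mul, ite_true, if_pos] at this
      linarith
    left
    rw [smul_one_sq, int_sq_of_pow4 _ ha4, one_smul]

lemma no8_lemma (M : M2') (h8 : M ^ 8 = 1) : M ^ 4 = 1 := by
  have hD8 : (M 0 0 * M 1 1 - M 0 1 * M 1 0) * (M 0 0 * M 1 1 - M 0 1 * M 1 0) = 1 := by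
    have h1 : (M.det) ^ 8 = 1 := by rw [← Matrix.det_pow, h8, Matrix.det_one]
    rw [Matrix.det_fin_two] at h1
    exact int_sq_of_pow8 _ h1
  have hsq4 : (M * M) ^ 4 = 1 := by
    rw [show M * M = M ^ 2 by rw [sq], ← pow_mul]; exact h8
  rcases four_lemma (M * M) hsq4 with h | h
  · rw [show M ^ 4 = (M*M)*(M*M) by rw [show (M*M)*(M*M) = (M^2)*(M^2) by rw [sq], ← pow_add]]
    exact h
  · -- M ^ 4 = -1 : contradiction
    exfalso
    have h4 : M ^ 4 = -1 := by
      rw [show M ^ 4 = (M*M)*(M*M) by rw [show (M*M)*(M*M) = (M^2)*(M^2) by rw [sq], ← pow_add]]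
      exact h
    have hp := pow4_expand M
    rw [h4] at hp
    have e01 : ((M 0 0 + M 1 1) ^ 3 - 2*(M 0 0 + M 1 1)*(M 0 0 * M 1 1 - M 0 1 * M 1 0)) * M 0 1 = 0 := by
      have := congrFun (congrFun hp 0) 1
      simp only [Matrix.add_apply, Matrix.smul_apply, Matrix.one_apply, Matrix.neg_apply,
        smul_eq_mul, Fin.zero_eq_one_iff, Nat.succ_ne_self, ite_false, ite_true] at this
      linarith
    have e10 : ((M 0 0 + M 1 1) ^ 3 - 2*(M 0 0 + M 1 1)*(M 0 0 * M 1 1 - M 0 1 * M 1 0)) * M 1 0 = 0 := by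
      have := congrFun (congrFun hp 1) 0
      simp only [Matrix.add_apply, Matrix.smul_apply, Matrix.one_apply, Matrix.neg_apply,
        smul_eq_mul, Fin.one_eq_zero_iff, Nat.succ_ne_self, ite_false, ite_true] at this
      linarith
    have e00 : ((M 0 0 + M 1 1) ^ 3 - 2*(M 0 0 + M 1 1)*(M 0 0 * M 1 1 - M 0 1 * M 1 0)) * M 0 0
        + ((M 0 0 * M 1 1 - M 0 1 * M 1 0) ^ 2
            - (M 0 0 + M 1 1) ^ 2 * (M 0 0 * M 1 1 - M 0 1 * M 1 0)) = -1 := by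
      have := congrFun (congrFun hp 0) 0
      simp only [Matrix.add_apply, Matrix.smul_apply, Matrix.one_apply, Matrix.neg_apply,
        smul_eq_mul, ite_true] at this
      linarith
    have e11 : ((M 0 0 + M 1 1) ^ 3 - 2*(M 0 0 + M 1 1)*(M 0 0 * M 1 1 - M 0 1 * M 1 0)) * M 1 1
        + ((M 0 0 * M 1 1 - M 0 1 * M 1 0) ^ 2
            - (M 0 0 + M 1 1) ^ 2 * (M 0 0 * M 1 1 - M 0 1 * M 1 0)) = -1 := by
      have := congrFun (congrFun hp 1) 1
      simp only [Matrix.add_apply, Matrix.smul_apply, Matrix.one_apply, Matrix.neg_apply,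
        smul_eq_mul, ite_true] at this
      linarith
    by_cases htz : M 0 0 + M 1 1 = 0
    · rw [htz] at e00
      nlinarith [hD8, e00]
    · have hcoef := coeff_ne (M 0 0 + M 1 1) (M 0 0 * M 1 1 - M 0 1 * M 1 0) hD8 htz
      have hb : M 0 1 = 0 := (mul_eq_zero.mp e01).resolve_left hcoef
      have hc : M 1 0 = 0 := (mul_eq_zero.mp e10).resolve_left hcoef
      have had : M 0 0 = M 1 1 := by
        have h5 : ((M 0 0 + M 1 1) ^ 3 - 2*(M 0 0 + M 1 1)*(M 0 0 * M 1 1 - M 0 1 * M 1 0))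
            * (M 0 0 - M 1 1) = 0 := by linear_combination e00 - e11
        have := (mul_eq_zero.mp h5).resolve_left hcoef
        linarith
      have hsc : M = (M 0 0) • (1 : M2') := by
        rw [eq_ext]
        simp only [Matrix.smul_apply, Matrix.one_apply, smul_eq_mul]
        norm_num
        exact ⟨hb, hc, had.symm⟩
      obtain ⟨a, hsc'⟩ : ∃ a : ℤ, M = a • (1 : M2') := ⟨M 0 0, hsc⟩
      rw [hsc'] at h4
      have ha4 : a ^ 4 = -1 := by
        rw [smul_pow, one_pow] at h4
        have := congrFun (congrFun h4 0) 0
        simp only [Matrix.smul_apply, Matrix.one_apply, Matrix.neg_apply, smul_eq_mul,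
          ite_true] at this
        linarith
      nlinarith [sq_nonneg (a ^ 2), ha4]

lemma pow2_lemma (k : ℕ) : ∀ M : M2', M ^ (2 ^ k) = 1 → M ^ 4 = 1 := by
  induction k with
  | zero => intro M h; simp only [pow_zero, pow_one] at h; rw [h, one_pow]
  | succ n ih =>
    intro M h
    have h2 : (M ^ 2) ^ (2 ^ n) = 1 := by
      rw [← pow_mul]
      rw [show 2 * 2 ^ n = 2 ^ (n + 1) by rw [pow_succ, mul_comm]]
      exact h
    have h4 := ih (M ^ 2) h2
    have h8 : M ^ 8 = 1 := by
      rw [← pow_mul] at h4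
      exact h4
    exact no8_lemma M h8
end PowerLemmas




-- square = 1 classification
lemma L2 (M : M2') (h : M * M = 1) :
    M = 1 ∨ M = -1 ∨ (M 1 1 = -(M 0 0) ∧ M.det = -1) := by
  have hdet : M.det * M.det = 1 := by
    have := Matrix.det_mul M M
    rw [h, Matrix.det_one] at this
    linarith
  have hch := CH M
  rw [h] at hch
  have e01 : (M 0 0 + M 1 1) * M 0 1 = 0 := by
    have := congrFun (congrFun hch 0) 1
    simp only [Matrix.sub_apply, Matrix.smul_apply, Matrix.one_apply, smul_eq_mul,
      Fin.zero_eq_one_iff, Nat.succ_ne_self, ite_false, ite_true] at this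
    linarith
  have e10 : (M 0 0 + M 1 1) * M 1 0 = 0 := by
    have := congrFun (congrFun hch 1) 0
    simp only [Matrix.sub_apply, Matrix.smul_apply, Matrix.one_apply, smul_eq_mul,
      Fin.one_eq_zero_iff, Nat.succ_ne_self, ite_false, ite_true] at this
    linarith
  have e00 : (M 0 0 + M 1 1) * M 0 0 - (M 0 0 * M 1 1 - M 0 1 * M 1 0) = 1 := by
    have := congrFun (congrFun hch 0) 0
    simp only [Matrix.sub_apply, Matrix.smul_apply, Matrix.one_apply, smul_eq_mul,
      ite_true] at this
    linarith
  have e11 : (M 0 0 + M 1 1) * M 1 1 - (M 0 0 * M 1 1 - M 0 1 * M 1 0) = 1 := by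
    have := congrFun (congrFun hch 1) 1
    simp only [Matrix.sub_apply, Matrix.smul_apply, Matrix.one_apply, smul_eq_mul,
      ite_true] at this
    linarith
  by_cases htz : M 0 0 + M 1 1 = 0
  · right; right
    constructor
    · linarith
    · rw [Matrix.det_fin_two]
      rw [htz] at e00
      linarith
  · have hb : M 0 1 = 0 := (mul_eq_zero.mp e01).resolve_left htz
    have hc : M 1 0 = 0 := (mul_eq_zero.mp e10).resolve_left htz
    have had : M 0 0 = M 1 1 := by
      have h5 : (M 0 0 + M 1 1) * (M 0 0 - M 1 1) = 0 := by linear_combination e00 - e11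
      have := (mul_eq_zero.mp h5).resolve_left htz
      linarith
    have hsc : M = (M 0 0) • (1 : M2') := by
      rw [eq_ext]
      simp only [Matrix.smul_apply, Matrix.one_apply, smul_eq_mul]
      norm_num
      exact ⟨hb, hc, had.symm⟩
    obtain ⟨a, hsc'⟩ : ∃ a : ℤ, M = a • (1 : M2') := ⟨M 0 0, hsc⟩
    rw [hsc'] at h ⊢
    rw [smul_one_sq] at h
    have ha : a * a = 1 := by
      have := congrFun (congrFun h 0) 0
      simp only [Matrix.smul_apply, Matrix.one_apply, smul_eq_mul, ite_true] at this
      linarith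
    rcases int_pm_of_sq a ha with h1 | h1
    · left; rw [h1, one_smul]
    · right; left; rw [h1]
      rw [eq_ext]
      simp only [Matrix.smul_apply, Matrix.one_apply, Matrix.neg_apply, smul_eq_mul]
      norm_num

-- square = -1 classification
lemma L3 (M : M2') (h : M * M = -1) : M 1 1 = -(M 0 0) ∧ M.det = 1 := by
  have hch := CH M
  rw [h] at hch
  have e01 : (M 0 0 + M 1 1) * M 0 1 = 0 := by
    have := congrFun (congrFun hch 0) 1
    simp only [Matrix.sub_apply, Matrix.smul_apply, Matrix.one_apply, Matrix.neg_apply,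
      smul_eq_mul, Fin.zero_eq_one_iff, Nat.succ_ne_self, ite_false, ite_true] at this
    linarith
  have e10 : (M 0 0 + M 1 1) * M 1 0 = 0 := by
    have := congrFun (congrFun hch 1) 0
    simp only [Matrix.sub_apply, Matrix.smul_apply, Matrix.one_apply, Matrix.neg_apply,
      smul_eq_mul, Fin.one_eq_zero_iff, Nat.succ_ne_self, ite_false, ite_true] at this
    linarith
  have e00 : (M 0 0 + M 1 1) * M 0 0 - (M 0 0 * M 1 1 - M 0 1 * M 1 0) = -1 := by
    have := congrFun (congrFun hch 0) 0
    simp only [Matrix.sub_apply, Matrix.smul_apply, Matrix.one_apply, Matrix.neg_apply,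
      smul_eq_mul, ite_true] at this
    linarith
  have e11 : (M 0 0 + M 1 1) * M 1 1 - (M 0 0 * M 1 1 - M 0 1 * M 1 0) = -1 := by
    have := congrFun (congrFun hch 1) 1
    simp only [Matrix.sub_apply, Matrix.smul_apply, Matrix.one_apply, Matrix.neg_apply,
      smul_eq_mul, ite_true] at this
    linarith
  by_cases htz : M 0 0 + M 1 1 = 0
  · constructor
    · linarith
    · rw [Matrix.det_fin_two]
      rw [htz] at e00
      linarith
  · exfalso
    have hb : M 0 1 = 0 := (mul_eq_zero.mp e01).resolve_left htz
    have hc : M 1 0 = 0 := (mul_eq_zero.mp e10).resolve_left htz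
    have had : M 0 0 = M 1 1 := by
      have h5 : (M 0 0 + M 1 1) * (M 0 0 - M 1 1) = 0 := by linear_combination e00 - e11
      have := (mul_eq_zero.mp h5).resolve_left htz
      linarith
    have hsc : M = (M 0 0) • (1 : M2') := by
      rw [eq_ext]
      simp only [Matrix.smul_apply, Matrix.one_apply, smul_eq_mul]
      norm_num
      exact ⟨hb, hc, had.symm⟩
    obtain ⟨a, hsc'⟩ : ∃ a : ℤ, M = a • (1 : M2') := ⟨M 0 0, hsc⟩
    rw [hsc'] at h
    rw [smul_one_sq] at h
    have ha : a * a = -1 := by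
      have := congrFun (congrFun h 0) 0
      simp only [Matrix.smul_apply, Matrix.one_apply, Matrix.neg_apply, smul_eq_mul,
        ite_true] at this
      linarith
    nlinarith [sq_nonneg a]

-- mixed commuting case is impossible
lemma mixed_arith (a b c e f g : ℤ)
    (hdM : a * a + b * c = 1) (hdN : e * e + f * g = -1)
    (c00 : a * e + b * g = e * a + f * c)
    (c01 : a * f + b * (-e) = e * b + f * (-a))
    (c10 : c * e + (-a) * g = g * a + (-e) * c) : False := by
  have h1 : a * f = b * e := by
    have h2 : (2:ℤ) * (a * f) = 2 * (b * e) := by linear_combination c01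
    exact mul_left_cancel₀ two_ne_zero h2
  have h2 : c * e = a * g := by
    have h3 : (2:ℤ) * (c * e) = 2 * (a * g) := by linear_combination c10
    exact mul_left_cancel₀ two_ne_zero h3
  have h3 : b * g = f * c := by linear_combination c00
  have key : (e * e) * (a * a + b * c) = (a * a) * (e * e + f * g) := by
    linear_combination (b * e) * h2 - (a * g) * h1
  rw [hdM, hdN] at key
  have hae : a = 0 ∧ e = 0 := by
    constructor
    · nlinarith [sq_nonneg a, sq_nonneg e]
    · nlinarith [sq_nonneg a, sq_nonneg e]
  obtain ⟨ha0, he0⟩ := hae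
  subst ha0; subst he0
  simp only [mul_zero, zero_mul, add_zero, zero_add] at hdM hdN
  -- hdM : b * c = 1, hdN : f * g = -1, h3 : b * g = f * c
  rcases Int.eq_one_or_neg_one_of_mul_eq_one' hdM with ⟨hb1, hc1⟩ | ⟨hb1, hc1⟩ <;>
    rw [hb1, hc1] at h3 <;>
    · have hg : g = f := by linarith
      rw [hg] at hdN
      nlinarith [sq_nonneg f]


lemma mixed_impossible (M N : M2') (hM2 : M * M = 1) (hN2 : N * N = -1)
    (hcom : M * N = N * M) (hM1 : M ≠ 1) (hM1' : M ≠ -1) : False := by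
  have hMd : M 1 1 = -(M 0 0) ∧ M.det = -1 :=
    ((L2 M hM2).resolve_left hM1).resolve_left hM1'
  have hNd := L3 N hN2
  have c00 := congrFun (congrFun hcom 0) 0
  have c01 := congrFun (congrFun hcom 0) 1
  have c10 := congrFun (congrFun hcom 1) 0
  simp only [Matrix.mul_apply, Fin.sum_univ_two] at c00 c01 c10
  rw [hMd.1, hNd.1] at c01 c10
  have hdM' : M 0 0 * M 0 0 + M 0 1 * M 1 0 = 1 := by
    have h := hMd.2
    rw [Matrix.det_fin_two, hMd.1] at h
    linear_combination -h
  have hdN' : N 0 0 * N 0 0 + N 0 1 * N 1 0 = -1 := by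
    have h := hNd.2
    rw [Matrix.det_fin_two, hNd.1] at h
    linear_combination -h
  exact mixed_arith (M 0 0) (M 0 1) (M 1 0) (N 0 0) (N 0 1) (N 1 0) hdM' hdN' c00 c01 c10

lemma P3 (M N : M2') (hM : M * M = 1 ∨ M * M = -1) (hN : N * N = 1 ∨ N * N = -1)
    (hcom : M * N = N * M) (hM1 : M ≠ 1) (hM1' : M ≠ -1) (hN1 : N ≠ 1) (hN1' : N ≠ -1) :
    N = M ∨ N = -M := by
  have hX : (M * N) * (M * N) = (M * M) * (N * N) := by
    rw [mul_assoc, ← mul_assoc N M N, ← hcom, mul_assoc M N N, ← mul_assoc]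
  rcases hM with hM2 | hM2 <;> rcases hN with hN2 | hN2
  · -- both square 1
    have hMd : M 1 1 = -(M 0 0) ∧ M.det = -1 :=
      ((L2 M hM2).resolve_left hM1).resolve_left hM1'
    have hNd : N 1 1 = -(N 0 0) ∧ N.det = -1 :=
      ((L2 N hN2).resolve_left hN1).resolve_left hN1'
    rw [hM2, hN2, one_mul] at hX
    have hdX : (M * N).det = 1 := by
      rw [Matrix.det_mul, hMd.2, hNd.2]; norm_num
    have hMN : N = M * (M * N) := by rw [← mul_assoc, hM2, one_mul]
    rcases L2 (M * N) hX with h | h | h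
    · left; rw [h, mul_one] at hMN; exact hMN
    · right; rw [h, mul_neg_one] at hMN; exact hMN
    · rw [hdX] at h; norm_num at h
  · exact absurd (mixed_impossible M N hM2 hN2 hcom hM1 hM1') id
  · exact absurd (mixed_impossible N M hN2 hM2 hcom.symm hN1 hN1') id
  · -- both square -1
    have hMd := L3 M hM2
    have hNd := L3 N hN2
    rw [hM2, hN2] at hX
    have hX1 : (M * N) * (M * N) = 1 := by rw [hX]; simp
    have hdX : (M * N).det = 1 := by
      rw [Matrix.det_mul, hMd.2, hNd.2]; norm_num
    have hMN : -N = M * (M * N) := by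
      rw [← mul_assoc, hM2, neg_one_mul]
    rcases L2 (M * N) hX1 with h | h | h
    · right
      rw [h, mul_one] at hMN
      rw [← hMN, neg_neg]
    · left
      rw [h, mul_neg_one] at hMN
      exact neg_injective hMN
    · rw [hdX] at h; norm_num at h




lemma tr0 (M N : M2') (hdN : N.det ≠ 0) (h : M * N = -(N * M)) : M.trace = 0 := by
  have h1 : trace (M * N * N.adjugate) = N.det * M.trace := by
    rw [mul_assoc, Matrix.mul_adjugate, mul_smul_comm, mul_one, Matrix.trace_smul, smul_eq_mul]
  have h2 : trace (M * N * N.adjugate) = -(N.det * M.trace) := by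
    rw [h, neg_mul, Matrix.trace_neg, mul_assoc, Matrix.trace_mul_comm, mul_assoc,
      Matrix.adjugate_mul, mul_smul_comm, mul_one, Matrix.trace_smul, smul_eq_mul]
  have h3 : N.det * M.trace = 0 := by
    rw [h1] at h2
    linarith
  rcases mul_eq_zero.mp h3 with h' | h'
  · exact absurd h' hdN
  · exact h'

lemma P4_arith (a b c e f g p q r s : ℤ)
    (hDM : a * a + b * c ≠ 0) (hDN : e * e + f * g ≠ 0)
    (i1 : p * a + q * c = a * p + b * r)
    (i2 : p * b + q * (-a) = a * q + b * s)
    (i3 : r * a + s * c = c * p + (-a) * r)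
    (j1 : p * e + q * g = e * p + f * r)
    (j2 : p * f + q * (-e) = e * q + f * s)
    (j3 : r * e + s * g = g * p + (-e) * r)
    (anti : a * e + b * g = -(e * a + f * c)) :
    q = 0 ∧ r = 0 ∧ p = s := by
  by_cases hb : b = 0
  · by_cases hc : c = 0
    · -- b = 0, c = 0
      have ha : a ≠ 0 := by
        intro h0; apply hDM; rw [h0, hb, hc]; ring
      have he : e = 0 := by
        have h0 : 2 * (a * e) = 0 := by rw [hb, hc] at anti; linarith
        have := mul_eq_zero.mp h0
        rcases this with h' | h'
        · norm_num at h'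
        · exact (mul_eq_zero.mp h').resolve_left ha
      have hf : f ≠ 0 ∧ g ≠ 0 := by
        rw [he] at hDN
        simp only [mul_zero, zero_mul, zero_add] at hDN
        exact mul_ne_zero_iff.mp hDN
      have hq : q = 0 := by
        have h0 : 2 * (a * q) = 0 := by rw [hb] at i2; linarith
        have := (mul_eq_zero.mp h0).resolve_left (by norm_num)
        exact (mul_eq_zero.mp this).resolve_left ha
      have hr : r = 0 := by
        have h0 : 2 * (a * r) = 0 := by rw [hc] at i3; linarith
        have := (mul_eq_zero.mp h0).resolve_left (by norm_num)
        exact (mul_eq_zero.mp this).resolve_left ha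
      have hps : p = s := by
        have h0 : f * (p - s) = 0 := by rw [he] at j2; linarith
        have := (mul_eq_zero.mp h0).resolve_left hf.1
        linarith
      exact ⟨hq, hr, hps⟩
    · -- b = 0, c ≠ 0
      have hq : q = 0 := by
        have h0 : q * c = 0 := by rw [hb] at i1; linarith
        exact (mul_eq_zero.mp h0).resolve_right hc
      by_cases hr : r = 0
      · have hps : p = s := by
          have h0 : c * (s - p) = 0 := by rw [hr] at i3; linarith
          have := (mul_eq_zero.mp h0).resolve_left hc
          linarith
        exact ⟨hq, hr, hps⟩
      · exfalso
        have hf : f = 0 := by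
          have h0 : f * r = 0 := by rw [hq] at j1; linarith
          exact (mul_eq_zero.mp h0).resolve_right hr
        have he : e ≠ 0 := by
          intro h0; apply hDN; rw [h0, hf]; ring
        have ha : a = 0 := by
          have h0 : 2 * (a * e) = 0 := by rw [hb, hf] at anti; linarith
          have := (mul_eq_zero.mp h0).resolve_left (by norm_num)
          exact (mul_eq_zero.mp this).resolve_right he
        apply hDM
        rw [ha, hb]; ring
  · -- b ≠ 0
    by_cases hq : q = 0
    · have hr : r = 0 := by
        have h0 : b * r = 0 := by rw [hq] at i1; linarith
        exact (mul_eq_zero.mp h0).resolve_left hb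
      have hps : p = s := by
        have h0 : b * (p - s) = 0 := by rw [hq] at i2; linarith
        have := (mul_eq_zero.mp h0).resolve_left hb
        linarith
      exact ⟨hq, hr, hps⟩
    · exfalso
      have haf : a * f - b * e = 0 := by
        have h0 : (2 * q) * (a * f - b * e) = 0 := by linear_combination b * j2 - f * i2
        have := (mul_eq_zero.mp h0).resolve_left (by
          intro h'
          exact hq ((mul_eq_zero.mp h').resolve_left (by norm_num)))
        linarith
      have hfc : f * c - b * g = 0 := by
        have h0 : q * (f * c - b * g) = 0 := by linear_combination f * i1 - b * j1
        have := (mul_eq_zero.mp h0).resolve_left hq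
        linarith
      have hae : a * e + f * c = 0 := by
        have hae2 : 2 * (a * e + f * c) = 0 := by linear_combination anti + hfc
        have := (mul_eq_zero.mp hae2).resolve_left (by norm_num : (2:ℤ) ≠ 0)
        exact this
      have hef : e * f * (a * a + b * c) = 0 := by
        linear_combination (a * f) * hae - (f * c) * haf
      have hef0 : e * f = 0 := by
        have := mul_eq_zero.mp hef
        rcases this with h' | h'
        · exact h'
        · exact absurd h' hDM
      rcases mul_eq_zero.mp hef0 with he | hf
      · -- e = 0
        have hfg : f ≠ 0 ∧ g ≠ 0 := by
          rw [he] at hDN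
          simp only [mul_zero, zero_mul, zero_add] at hDN
          exact mul_ne_zero_iff.mp hDN
        have ha : a = 0 := by
          have h0 : a * f = 0 := by rw [he] at haf; linarith
          exact (mul_eq_zero.mp h0).resolve_right hfg.1
        have hc : c = 0 := by
          have h0 : f * c = 0 := by rw [ha, he] at hae; linarith
          exact (mul_eq_zero.mp h0).resolve_left hfg.1
        have hg : g = 0 := by
          have h0 : b * g = 0 := by rw [hc] at hfc; linarith
          exact (mul_eq_zero.mp h0).resolve_left hb
        exact hfg.2 hg
      · -- f = 0
        have he : e = 0 := by
          have h0 : b * e = 0 := by rw [hf] at haf; linarith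
          exact (mul_eq_zero.mp h0).resolve_left hb
        apply hDN
        rw [he, hf]; ring

lemma P4 (M N K : M2')
    (hdM : M.det = 1 ∨ M.det = -1) (hdN : N.det = 1 ∨ N.det = -1)
    (hdK : K.det = 1 ∨ K.det = -1)
    (hanti : M * N = -(N * M)) (h1 : K * M = M * K) (h2 : K * N = N * K) :
    K = 1 ∨ K = -1 := by
  have hdM0 : M.det ≠ 0 := by rcases hdM with h | h <;> rw [h] <;> norm_num
  have hdN0 : N.det ≠ 0 := by rcases hdN with h | h <;> rw [h] <;> norm_num
  have htM : M.trace = 0 := tr0 M N hdN0 hanti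
  have htN : N.trace = 0 := tr0 N M hdM0 (by rw [hanti, neg_neg])
  rw [Matrix.trace_fin_two] at htM htN
  have hM11 : M 1 1 = -(M 0 0) := by linarith
  have hN11 : N 1 1 = -(N 0 0) := by linarith
  have hDM : M 0 0 * M 0 0 + M 0 1 * M 1 0 ≠ 0 := by
    intro h0
    apply hdM0
    rw [Matrix.det_fin_two, hM11]
    linear_combination -h0
  have hDN : N 0 0 * N 0 0 + N 0 1 * N 1 0 ≠ 0 := by
    intro h0
    apply hdN0
    rw [Matrix.det_fin_two, hN11]
    linear_combination -h0
  have i1 := congrFun (congrFun h1 0) 0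
  have i2 := congrFun (congrFun h1 0) 1
  have i3 := congrFun (congrFun h1 1) 0
  have j1 := congrFun (congrFun h2 0) 0
  have j2 := congrFun (congrFun h2 0) 1
  have j3 := congrFun (congrFun h2 1) 0
  have anti := congrFun (congrFun hanti 0) 0
  simp only [Matrix.mul_apply, Fin.sum_univ_two, Matrix.neg_apply] at i1 i2 i3 j1 j2 j3 anti
  rw [hM11] at i2 i3
  rw [hN11] at j2 j3
  obtain ⟨hq, hr, hps⟩ := P4_arith (M 0 0) (M 0 1) (M 1 0) (N 0 0) (N 0 1) (N 1 0)
    (K 0 0) (K 0 1) (K 1 0) (K 1 1) hDM hDN i1 i2 i3 j1 j2 j3 anti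
  -- K is scalar
  have hdK' : K 0 0 * K 0 0 = 1 := by
    rcases hdK with h | h <;> rw [Matrix.det_fin_two, hq, ← hps] at h
    · linear_combination h
    · exfalso; nlinarith [sq_nonneg (K 0 0)]
  rcases int_pm_of_sq _ hdK' with h | h
  · left
    rw [eq_ext]
    simp only [Matrix.one_apply]
    norm_num
    exact ⟨h, hq, hr, by rw [← hps, h]⟩
  · right
    rw [eq_ext]
    simp only [Matrix.neg_apply, Matrix.one_apply]
    norm_num
    exact ⟨h, hq, hr, by rw [← hps, h]⟩




section Units

lemma val_neg_one : ((-1 : GL2') : M2') = -1 := by simp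

lemma detpm (x : GL2') : (x : M2').det = 1 ∨ (x : M2').det = -1 := by
  have h : IsUnit (x : M2').det := by
    apply Matrix.isUnit_iff_isUnit_det (x : M2') |>.mp
    exact Units.isUnit x
  exact Int.isUnit_iff.mp h

lemma unit_sq_pm (x : GL2') (k : ℕ) (hx : x ^ (2 ^ k) = 1) : x * x = 1 ∨ x * x = -1 := by
  have hm : ((x : M2')) ^ (2 ^ k) = 1 := by
    have := congrArg (Units.val) hx
    rwa [Units.val_pow_eq_pow_val, Units.val_one] at this
  have h4 := pow2_lemma k _ hm
  rcases four_lemma _ h4 with h | h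
  · left; ext; rw [Units.val_mul, h, Units.val_one]
  · right; ext; rw [Units.val_mul, h, val_neg_one]

lemma comm_pm (x y : GL2') (hx : x * x = 1 ∨ x * x = -1) (hy : y * y = 1 ∨ y * y = -1)
    (hxy : (x * y) * (x * y) = 1 ∨ (x * y) * (x * y) = -1) :
    x * y = y * x ∨ x * y = -(y * x) := by
  have key : x * ((x * y) * (x * y)) * y = (x * x) * ((y * x) * (y * y)) := by
    group
  rcases hx with hx | hx <;> rcases hy with hy | hy <;> rcases hxy with hxy | hxy <;>
      rw [hx, hy, hxy] at key <;>
      simp only [one_mul, mul_one, mul_neg, neg_mul, neg_neg, mul_neg_one, neg_inj] at key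
  · exact Or.inl key
  · exact Or.inr (by rw [← key, neg_neg])
  · exact Or.inr key
  · exact Or.inl key
  · exact Or.inr key
  · exact Or.inl key
  · exact Or.inl key
  · exact Or.inr (by rw [← key, neg_neg])

/-- sign bit distinguishing u from -u -/
noncomputable def sg (x : GL2') : Bool :=
  @decide (0 < (x : M2') 0 0 ∨ ((x : M2') 0 0 = 0 ∧ 0 < (x : M2') 0 1))
    (Classical.propDecidable _)

lemma sg_neg (x : GL2') : sg (-x) ≠ sg x := by
  have hdet := detpm x
  unfold sg
  rw [Ne, decide_eq_decide]
  have hv : ((-x : GL2') : M2') = -(x : M2') := Units.val_neg x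
  rw [hv]
  simp only [Matrix.neg_apply]
  rw [Matrix.det_fin_two] at hdet
  have hb : (x : M2') 0 0 = 0 → (x : M2') 0 1 ≠ 0 := by
    intro h0 h1
    rw [h0, h1] at hdet
    simp at hdet
  intro hiff
  rcases lt_trichotomy ((x : M2') 0 0) 0 with h | h | h
  · have := hiff.mp (Or.inl (by linarith))
    rcases this with h' | h'
    · linarith
    · linarith [h'.1]
  · have hb' := hb h
    rcases lt_trichotomy ((x : M2') 0 1) 0 with h1 | h1 | h1
    · have := hiff.mp (Or.inr ⟨by linarith, by linarith⟩)
      rcases this with h' | h'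
      · linarith
      · linarith [h'.2]
    · exact hb' h1
    · have := hiff.mpr (Or.inr ⟨h, h1⟩)
      rcases this with h' | h'
      · linarith
      · linarith [h'.2]
  · have := hiff.mpr (Or.inl h)
    rcases this with h' | h'
    · linarith
    · linarith [h'.1]

end Units


lemma det_ne_zero (u : GL2') : ((u : M2')).det ≠ 0 := by
  rcases detpm u with h | h <;> rw [h] <;> norm_num

lemma unit_ne_neg_self (u : GL2') : u ≠ -u := by
  intro h
  have hv : (u : M2') = -(u : M2') := by
    have := congrArg Units.val h
    rwa [Units.val_neg] at this
  have hz : ∀ i j, (u : M2') i j = 0 := by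
    intro i j
    have := congrFun (congrFun hv i) j
    simp only [Matrix.neg_apply] at this
    linarith
  apply det_ne_zero u
  rw [Matrix.det_fin_two, hz 0 0, hz 0 1]
  ring

lemma g_comm (C : GL2') (x y : GL2')
    (h1 : (x * C = C * x) ↔ (y * C = C * y))
    (hx : x * C = C * x ∨ x * C = -(C * x))
    (hy : y * C = C * y ∨ y * C = -(C * y)) :
    (x * y⁻¹) * C = C * (x * y⁻¹) := by
  rcases hx with hx' | hx' <;> rcases hy with hy' | hy'
  · exact (Commute.mul_left hx' (Commute.inv_left hy'))
  · exfalso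
    have hcomm : y * C = C * y := h1.mp hx'
    rw [hcomm] at hy'
    exact unit_ne_neg_self (C * y) hy'
  · exfalso
    have hcomm : x * C = C * x := h1.mpr hy'
    rw [hcomm] at hx'
    exact unit_ne_neg_self (C * x) hx'
  · have hCy : C * y = -(y * C) := by rw [hy', neg_neg]
    have hy2 : y⁻¹ * C = -(C * y⁻¹) := by
      calc y⁻¹ * C = y⁻¹ * (C * y) * y⁻¹ := by group
        _ = y⁻¹ * (-(y * C)) * y⁻¹ := by rw [hCy]
        _ = -(y⁻¹ * (y * C) * y⁻¹) := by rw [mul_neg, neg_mul]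
        _ = -(C * y⁻¹) := congrArg Neg.neg (by group)
    rw [mul_assoc, hy2, mul_neg, ← mul_assoc, hx', neg_mul, neg_neg, mul_assoc]

theorem stmt_4 (H : Subgroup (Matrix.GeneralLinearGroup (Fin 2) ℤ))
    [Finite H] (hH : IsPGroup 2 H) :
    Nat.card H ≤ 8 := by
  classical
  have key : ∀ x : GL2', x ∈ H → (x * x = 1 ∨ x * x = -1) := by
    intro x hx
    obtain ⟨k, hk⟩ := hH ⟨x, hx⟩
    have hk' : (⟨x, hx⟩ : H) ^ (2 ^ k) = 1 := hk
    have : x ^ (2 ^ k) = 1 := by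
      have := congrArg (Subtype.val) hk'
      simpa using this
    exact unit_sq_pm x k this
  have hsqv : ∀ u : GL2', u ∈ H →
      ((u : M2') * (u : M2') = 1 ∨ (u : M2') * (u : M2') = -1) := by
    intro u hu
    rcases key u hu with h | h
    · left; rw [← Units.val_mul, h, Units.val_one]
    · right; rw [← Units.val_mul, h, val_neg_one]
  have hne : ∀ (u : GL2'), u ≠ 1 → (u : M2') ≠ 1 := by
    intro u hu h
    exact hu (Units.ext (by rw [h, Units.val_one]))
  have hne' : ∀ (u : GL2'), u ≠ -1 → (u : M2') ≠ -1 := by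
    intro u hu h
    exact hu (Units.ext (by rw [h, val_neg_one]))
  have hcard : ∀ S : Set GL2', (H : Set GL2') ⊆ S → S.Finite → S.ncard ≤ 8 → Nat.card H ≤ 8 := by
    intro S hsub hfin hS
    have h1 : Nat.card H = (H : Set GL2').ncard := (Nat.card_coe_set_eq _)
    rw [h1]
    exact le_trans (Set.ncard_le_ncard hsub hfin) hS
  by_cases hab : ∀ x ∈ H, ∀ y ∈ H, x * y = y * x
  · -- abelian case
    by_cases hA : ∃ A ∈ H, A ≠ 1 ∧ A ≠ -1
    · obtain ⟨A, hAH, hA1, hA1'⟩ := hA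
      apply hcard {1, -1, A, -A}
      · intro x hx
        by_cases hx1 : x = 1
        · exact Or.inl hx1
        by_cases hx1' : x = -1
        · exact Or.inr (Or.inl hx1')
        have hcomv : (A : M2') * (x : M2') = (x : M2') * (A : M2') := by
          rw [← Units.val_mul, ← Units.val_mul, hab A hAH x hx]
        rcases P3 (A : M2') (x : M2') (hsqv A hAH) (hsqv x hx) hcomv
            (hne A hA1) (hne' A hA1') (hne x hx1) (hne' x hx1') with h | h
        · exact Or.inr (Or.inr (Or.inl (Units.ext h)))
        · refine Or.inr (Or.inr (Or.inr ?_))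
          have : x = -A := Units.ext (by rw [h, Units.val_neg])
          exact this
      · exact Set.Finite.insert _ (Set.Finite.insert _ (Set.Finite.insert _
          (Set.finite_singleton _)))
      · have h1 := Set.ncard_insert_le (1 : GL2') {-1, A, -A}
        have h2 := Set.ncard_insert_le (-1 : GL2') {A, -A}
        have h3 := Set.ncard_insert_le A {-A}
        have h4 : ({-A} : Set GL2').ncard = 1 := Set.ncard_singleton _
        omega
    · push_neg at hA
      apply hcard {1, -1}
      · intro x hx
        by_cases hx1 : x = 1
        · exact Or.inl hx1
        · exact Or.inr (hA x hx hx1)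
      · exact Set.Finite.insert _ (Set.finite_singleton _)
      · have h1 := Set.ncard_insert_le (1 : GL2') {(-1 : GL2')}
        have h2 : ({-1} : Set GL2').ncard = 1 := Set.ncard_singleton _
        omega
  · -- nonabelian case
    push_neg at hab
    obtain ⟨A, hAH, B, hBH, hABne⟩ := hab
    have hanti : A * B = -(B * A) := by
      rcases comm_pm A B (key A hAH) (key B hBH) (key _ (H.mul_mem hAH hBH)) with h | h
      · exact absurd h hABne
      · exact h
    set f : H → Bool × Bool × Bool := fun h =>
      (@decide ((h : GL2') * A = A * (h : GL2')) (Classical.propDecidable _),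
       @decide ((h : GL2') * B = B * (h : GL2')) (Classical.propDecidable _),
       sg (h : GL2')) with hf
    have hcommA : ∀ x : H, (x : GL2') * A = A * (x : GL2') ∨
        (x : GL2') * A = -(A * (x : GL2')) :=
      fun x => comm_pm (x : GL2') A (key _ x.2) (key A hAH) (key _ (H.mul_mem x.2 hAH))
    have hcommB : ∀ x : H, (x : GL2') * B = B * (x : GL2') ∨
        (x : GL2') * B = -(B * (x : GL2')) :=
      fun x => comm_pm (x : GL2') B (key _ x.2) (key B hBH) (key _ (H.mul_mem x.2 hBH))
    have hinj : Function.Injective f := by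
      intro x y hxy
      rw [hf] at hxy
      simp only [Prod.mk.injEq] at hxy
      obtain ⟨h1, h2, h3⟩ := hxy
      rw [decide_eq_decide] at h1 h2
      have gA := g_comm A (x : GL2') (y : GL2') h1 (hcommA x) (hcommA y)
      have gB := g_comm B (x : GL2') (y : GL2') h2 (hcommB x) (hcommB y)
      -- pass to matrices
      set g : GL2' := (x : GL2') * (y : GL2')⁻¹ with hg
      have gAv : (g : M2') * (A : M2') = (A : M2') * (g : M2') := by
        rw [← Units.val_mul, ← Units.val_mul, gA]
      have gBv : (g : M2') * (B : M2') = (B : M2') * (g : M2') := by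
        rw [← Units.val_mul, ← Units.val_mul, gB]
      have hantiv : (A : M2') * (B : M2') = -((B : M2') * (A : M2')) := by
        rw [← Units.val_mul, ← Units.val_mul, hanti, Units.val_neg]
      rcases P4 (A : M2') (B : M2') (g : M2') (detpm A) (detpm B) (detpm g)
          hantiv gAv gBv with h | h
      · -- g = 1
        have : g = 1 := Units.ext (by rw [h, Units.val_one])
        rw [hg] at this
        have hxy' : (x : GL2') = (y : GL2') := by
          have := mul_eq_one_iff_eq_inv.mp this
          rwa [inv_inv] at this
        exact Subtype.ext hxy'
      · -- g = -1 : contradicts sign bit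
        exfalso
        have hgneg : g = -1 := Units.ext (by rw [h, val_neg_one])
        rw [hg] at hgneg
        have hxy' : (x : GL2') = -(y : GL2') := by
          have h5 : (x : GL2') * (y : GL2')⁻¹ * (y : GL2') = -1 * (y : GL2') := by
            rw [hgneg]
          rw [inv_mul_cancel_right, neg_one_mul] at h5
          exact h5
        have := sg_neg (y : GL2')
        rw [← hxy'] at this
        exact this h3
    have hle := Nat.card_le_card_of_injective f hinj
    have hcard8 : Nat.card (Bool × Bool × Bool) = 8 := by
      simp [Nat.card_eq_fintype_card]
    omega
end

section
/- Every finite 2-subgroup of GL₂(ℤ) is conjugate in GL₂(ℤ) to a subgroup of the dihedral group of order 8 generated by the matrices A = [[0,-1],[1,0]] and B = [[1,0],[0,-1]]. -/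
/-!
An element of `GL₂(ℤ)` of 2-power order squares to `±1`, since `tr (x²) = (tr x)² - 2 det x` never
vanishes; if it is not `±1`, its trace vanishes. If `H` contains an element of order 4, conjugate
it to `A`: this amounts to the binary quadratic forms of discriminant `-4` representing `±1`. Then
for `k ∈ H` each of `k` and `k A` is `±1` or has trace zero, which leaves only the eight signed
permutation matrices `±1, ±A, ±B, ±AB`. Otherwise every element of `H` is an involution. A
non-central one fixes a primitive vector and is therefore conjugate to `B` or `AB`, and comparing
determinants shows that every other element of `H` is `±1` or `±` that involution.
-/

open Matrix

theorem Matrix.of_fin_two_inj {α : Type*} {a b c d a' b' c' d' : α} :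
    !![a, b; c, d] = !![a', b'; c', d'] ↔ a = a' ∧ b = b' ∧ c = c' ∧ d = d' := by
  simp [and_assoc]

theorem Matrix.sq_eq_trace_smul_sub_det_smul {R : Type*} [CommRing R]
    (M : Matrix (Fin 2) (Fin 2) R) : M ^ 2 = M.trace • M - M.det • 1 := by
  ext i j
  fin_cases i <;> fin_cases j <;>
    simp [sq, mul_apply, Fin.sum_univ_two, trace_fin_two, det_fin_two] <;> ring

theorem Matrix.trace_sq_fin_two {R : Type*} [CommRing R] (M : Matrix (Fin 2) (Fin 2) R) :
    (M ^ 2).trace = M.trace ^ 2 - 2 * M.det := by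
  rw [sq_eq_trace_smul_sub_det_smul, trace_sub, trace_smul, trace_smul, trace_one]
  simp only [smul_eq_mul, Fintype.card_fin, Nat.cast_ofNat]
  ring

theorem Matrix.det_eq_neg_of_trace_eq_zero {R : Type*} [CommRing R]
    {M : Matrix (Fin 2) (Fin 2) R} (ht : M.trace = 0) {ε : R} (hM : M ^ 2 = ε • 1) :
    M.det = -ε := by
  rw [sq_eq_trace_smul_sub_det_smul, ht, zero_smul, zero_sub] at hM
  have h₀₀ := congrFun₂ hM 0 0
  simp only [neg_apply, Matrix.smul_apply, one_apply_eq, smul_eq_mul, mul_one] at h₀₀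
  rw [← h₀₀, neg_neg]

theorem Matrix.eq_one_or_eq_neg_one_or_trace_eq_zero {M : Matrix (Fin 2) (Fin 2) ℤ}
    (hM : M ^ 2 = 1 ∨ M ^ 2 = -1) : M = 1 ∨ M = -1 ∨ M.trace = 0 := by
  rw [sq, eta_fin_two M, mul_fin_two, one_fin_two, trace_fin_two_of] at *
  simp only [neg_of, neg_cons, neg_zero, neg_empty, of_fin_two_inj] at hM ⊢
  generalize M 0 0 = a, M 0 1 = b, M 1 0 = c, M 1 1 = d at *
  obtain ⟨ε, hε, h1, h2, h3, h4⟩ : ∃ ε : ℤ, (ε = 1 ∨ ε = -1) ∧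
      a * a + b * c = ε ∧ a * b + b * d = 0 ∧ c * a + d * c = 0 ∧ c * b + d * d = ε := by
    rcases hM with hM | hM
    exacts [⟨1, .inl rfl, hM⟩, ⟨-1, .inr rfl, hM⟩]
  rcases eq_or_ne (a + d) 0 with ht | ht
  · exact .inr (.inr ht)
  obtain rfl : b = 0 :=
    (mul_eq_zero.mp (by linear_combination h2 : b * (a + d) = 0)).resolve_right ht
  obtain rfl : c = 0 :=
    (mul_eq_zero.mp (by linear_combination h3 : c * (a + d) = 0)).resolve_right ht
  obtain rfl : a = d := sub_eq_zero.mp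
    ((mul_eq_zero.mp (by linear_combination h1 - h4 : (a - d) * (a + d) = 0)).resolve_right ht)
  have ha : a * a = 1 := by rcases hε with rfl | rfl <;> nlinarith
  rcases mul_self_eq_one_iff.mp ha with rfl | rfl <;> simp

theorem Matrix.GeneralLinearGroup.exists_conj_eq_of_mul_eq {n R : Type*} [Fintype n]
    [DecidableEq n] [CommRing R] {u v : GL n R} (P : Matrix n n R) (hP : IsUnit P.det)
    (h : (u : Matrix n n R) * P = P * v) : ∃ g : GL n R, g * u * g⁻¹ = v := by
  refine ⟨(mk'' P hP)⁻¹, ?_⟩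
  rw [inv_inv, mul_assoc, inv_mul_eq_iff_eq_mul]
  exact Units.ext h

theorem exists_eq_one_of_discr_eq_neg_four {a b c : ℤ} (hc : 0 < c) (h : a * a + b * c = -1) :
    ∃ x y : ℤ, c * x * x - 2 * a * x * y - b * y * y = 1 := by
  obtain rfl | hc1 := eq_or_lt_of_le (Int.add_one_le_of_lt hc)
  · exact ⟨1, 0, by ring⟩
  set r := a.bmod c.toNat
  have hr : 4 * (r * r) ≤ c * c := by
    have h1 := Int.le_bmod (x := a) (m := c.toNat) (by omega)
    have h2 := Int.bmod_lt (x := a) (m := c.toNat) (by omega)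
    nlinarith [mul_nonneg (show 0 ≤ c - 2 * r by omega) (show 0 ≤ c + 2 * r by omega)]
  -- With `a = r + c k`, the substitution `(x, y) ↦ (k x + y, x)` turns the form into the one
  -- attached to `(r, -c, c')`, where `c c' = r² + 1 < c²` because `|r| ≤ c / 2`.
  obtain ⟨k, hk⟩ : c ∣ a - r := by
    have : r % c = a % c := by
      simpa [Int.toNat_of_nonneg hc.le] using Int.bmod_emod (x := a) (m := c.toNat)
    exact Int.ModEq.dvd this
  set c' := c * k * k - 2 * a * k - b
  have hcc' : c * c' = r * r + 1 := by
    linear_combination (-1 : ℤ) * h + (a - c * k + r) * hk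
  have hc' : 0 < c' := by nlinarith
  have hc'c : c' < c := by nlinarith
  obtain ⟨x, y, hxy⟩ := exists_eq_one_of_discr_eq_neg_four (a := r) (b := -c) hc'
    (by linear_combination -hcc')
  exact ⟨k * x + y, x, by linear_combination hxy - 2 * x * y * hk⟩
termination_by c.toNat

theorem exists_isUnit_of_discr_eq_neg_four {a b c : ℤ} (h : a * a + b * c = -1) :
    ∃ x y : ℤ, IsUnit (c * x * x - 2 * a * x * y - b * y * y) := by
  rcases lt_trichotomy c 0 with hc | rfl | hc
  · obtain ⟨x, y, hxy⟩ := exists_eq_one_of_discr_eq_neg_four (a := -a) (b := -b) (neg_pos.mpr hc)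
      (by linear_combination h)
    refine ⟨x, y, ?_⟩
    rw [show c * x * x - 2 * a * x * y - b * y * y = -1 by linear_combination -hxy]
    exact isUnit_one.neg
  · nlinarith
  · obtain ⟨x, y, hxy⟩ := exists_eq_one_of_discr_eq_neg_four hc h
    exact ⟨x, y, hxy ▸ isUnit_one⟩

theorem exists_isCoprime_fixed_of_det_eq_neg_one {p q r : ℤ} (h : p * p + q * r = 1) :
    ∃ e₁ e₂ : ℤ, IsCoprime e₁ e₂ ∧ p * e₁ + q * e₂ = e₁ ∧ r * e₁ - p * e₂ = e₂ := by
  obtain ⟨w₁, w₂, hw, hw₁, hw₂⟩ : ∃ w₁ w₂ : ℤ, (w₁ ≠ 0 ∨ w₂ ≠ 0) ∧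
      p * w₁ + q * w₂ = w₁ ∧ r * w₁ - p * w₂ = w₂ := by
    -- both `(p + 1, r)` and `(q, 1 - p)` are fixed, and they cannot both vanish
    by_cases hpr : p + 1 = 0 ∧ r = 0
    · exact ⟨q, 1 - p, by omega, by ring, by linear_combination h⟩
    · exact ⟨p + 1, r, by omega, by linear_combination h, by ring⟩
  obtain ⟨g, e₁, e₂, hg, hgcd, rfl, rfl⟩ := Int.exists_gcd_one' (Int.gcd_pos_iff.mpr hw)
  have hg0 : (g : ℤ) ≠ 0 := by exact_mod_cast hg.ne'
  exact ⟨e₁, e₂, Int.isCoprime_iff_gcd_eq_one.mpr hgcd,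
    mul_right_cancel₀ hg0 (by linear_combination hw₁),
    mul_right_cancel₀ hg0 (by linear_combination hw₂)⟩

local notation "GL₂ℤ" => GL (Fin 2) ℤ

namespace GL2Int

noncomputable def rotation : GL₂ℤ := GeneralLinearGroup.mk'' !![0, -1; 1, 0] (by simp)

noncomputable def reflection : GL₂ℤ := GeneralLinearGroup.mk'' !![1, 0; 0, -1] (by simp)

def dihedral : Subgroup GL₂ℤ := Subgroup.closure {rotation, reflection}

@[simp] theorem coe_rotation : (rotation : Matrix (Fin 2) (Fin 2) ℤ) = !![0, -1; 1, 0] := rfl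

@[simp] theorem coe_reflection : (reflection : Matrix (Fin 2) (Fin 2) ℤ) = !![1, 0; 0, -1] := rfl

theorem coe_rotation_mul_reflection :
    ((rotation * reflection : GL₂ℤ) : Matrix (Fin 2) (Fin 2) ℤ) = !![0, 1; 1, 0] := by
  simp

theorem rotation_sq : rotation ^ 2 = -1 := by
  ext i j; fin_cases i <;> fin_cases j <;> simp [sq]

theorem det_eq_one_or_neg_one (x : GL₂ℤ) :
    (x : Matrix (Fin 2) (Fin 2) ℤ).det = 1 ∨ (x : Matrix (Fin 2) (Fin 2) ℤ).det = -1 :=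
  Int.isUnit_iff.mp ((isUnit_iff_isUnit_det _).mp x.isUnit)

theorem one_ne_neg_one : (1 : GL₂ℤ) ≠ -1 := by
  intro h
  simpa using congrArg (fun g : GL₂ℤ ↦ (g : Matrix (Fin 2) (Fin 2) ℤ) 0 0) h

theorem eq_one_or_eq_neg_one_or_trace_eq_zero {x : GL₂ℤ} (hx : x ^ 2 = 1 ∨ x ^ 2 = -1) :
    x = 1 ∨ x = -1 ∨ (x : Matrix (Fin 2) (Fin 2) ℤ).trace = 0 := by
  simp only [Units.ext_iff, Units.val_pow_eq_pow_val, Units.val_neg, Units.val_one] at hx ⊢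
  exact Matrix.eq_one_or_eq_neg_one_or_trace_eq_zero hx

theorem trace_eq_zero_and_det_eq_one_of_sq_eq_neg_one {x : GL₂ℤ} (hx : x ^ 2 = -1) :
    (x : Matrix (Fin 2) (Fin 2) ℤ).trace = 0 ∧ (x : Matrix (Fin 2) (Fin 2) ℤ).det = 1 := by
  obtain rfl | rfl | ht := eq_one_or_eq_neg_one_or_trace_eq_zero (.inr hx)
  · exact absurd (by simpa using hx) one_ne_neg_one
  · exact absurd (by simpa using hx) one_ne_neg_one
  have hx' : (x : Matrix (Fin 2) (Fin 2) ℤ) ^ 2 = (-1 : ℤ) • 1 := by simpa [Units.ext_iff] using hx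
  exact ⟨ht, by simpa using det_eq_neg_of_trace_eq_zero ht hx'⟩

theorem trace_eq_zero_and_det_eq_neg_one_of_sq_eq_one {x : GL₂ℤ} (hx : x ^ 2 = 1)
    (h₁ : x ≠ 1) (h₂ : x ≠ -1) :
    (x : Matrix (Fin 2) (Fin 2) ℤ).trace = 0 ∧ (x : Matrix (Fin 2) (Fin 2) ℤ).det = -1 := by
  obtain rfl | rfl | ht := eq_one_or_eq_neg_one_or_trace_eq_zero (.inl hx)
  · exact absurd rfl h₁
  · exact absurd rfl h₂
  have hx' : (x : Matrix (Fin 2) (Fin 2) ℤ) ^ 2 = (1 : ℤ) • 1 := by simpa [Units.ext_iff] using hx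
  exact ⟨ht, by simpa using det_eq_neg_of_trace_eq_zero ht hx'⟩

theorem sq_eq_one_or_neg_one_of_pow_two_pow_eq_one {x : GL₂ℤ} {n : ℕ} (h : x ^ 2 ^ n = 1) :
    x ^ 2 = 1 ∨ x ^ 2 = -1 := by
  induction n generalizing x with
  | zero => simp_all
  | succ n ih =>
    obtain h₁ | h₁ | ht := eq_one_or_eq_neg_one_or_trace_eq_zero (ih (x := x ^ 2)
      (by rwa [← pow_mul, ← pow_succ']))
    · exact .inl h₁
    · exact .inr h₁
    rw [Units.val_pow_eq_pow_val, trace_sq_fin_two] at ht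
    exfalso
    obtain hd | hd := det_eq_one_or_neg_one x <;> rw [hd] at ht
    · refine Int.sq_ne_two_mod_four (x : Matrix (Fin 2) (Fin 2) ℤ).trace ?_
      rw [← sq, show (x : Matrix (Fin 2) (Fin 2) ℤ).trace ^ 2 = 2 by linarith]; rfl
    · nlinarith [sq_nonneg (x : Matrix (Fin 2) (Fin 2) ℤ).trace]

theorem exists_conj_eq_rotation {u : GL₂ℤ} (hu : u ^ 2 = -1) :
    ∃ g : GL₂ℤ, g * u * g⁻¹ = rotation := by
  obtain ⟨ht, hdet⟩ := trace_eq_zero_and_det_eq_one_of_sq_eq_neg_one hu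
  obtain ⟨a, b, c, d, hu'⟩ : ∃ a b c d, (u : Matrix (Fin 2) (Fin 2) ℤ) = !![a, b; c, d] :=
    ⟨_, _, _, _, eta_fin_two _⟩
  rw [hu', trace_fin_two_of] at ht
  obtain rfl : d = -a := by linarith
  rw [hu', det_fin_two_of] at hdet
  have h : a * a + b * c = -1 := by linear_combination -hdet
  obtain ⟨x, y, hxy⟩ := exists_isUnit_of_discr_eq_neg_four h
  -- the columns of the conjugating matrix are `(x, y)` and its image under `u`
  refine GeneralLinearGroup.exists_conj_eq_of_mul_eq !![x, a * x + b * y; y, c * x - a * y]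
    (by rwa [det_fin_two_of, show x * (c * x - a * y) - (a * x + b * y) * y =
      c * x * x - 2 * a * x * y - b * y * y by ring]) ?_
  rw [hu', coe_rotation, mul_fin_two, mul_fin_two, of_fin_two_inj]
  exact ⟨by ring, by linear_combination x * h, by ring, by linear_combination y * h⟩

theorem exists_conj_eq_reflection_or_rotation_mul_reflection {v : GL₂ℤ} (hv : v ^ 2 = 1)
    (h₁ : v ≠ 1) (h₂ : v ≠ -1) :
    ∃ g : GL₂ℤ, g * v * g⁻¹ = reflection ∨ g * v * g⁻¹ = rotation * reflection := by
  obtain ⟨ht, hdet⟩ := trace_eq_zero_and_det_eq_neg_one_of_sq_eq_one hv h₁ h₂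
  obtain ⟨p, q, r, d, hv'⟩ : ∃ p q r d, (v : Matrix (Fin 2) (Fin 2) ℤ) = !![p, q; r, d] :=
    ⟨_, _, _, _, eta_fin_two _⟩
  rw [hv', trace_fin_two_of] at ht
  obtain rfl : d = -p := by linarith
  rw [hv', det_fin_two_of] at hdet
  obtain ⟨e₁, e₂, ⟨m, n, hmn⟩, he₁, he₂⟩ :=
    exists_isCoprime_fixed_of_det_eq_neg_one (p := p) (q := q) (r := r)
      (by linear_combination -hdet)
  -- `f = (-n, m)` completes `e` to a basis and `v f = s e - f`; replacing `f` by `f - k e`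
  -- changes `s` by `-2 k`, so only the parity of `s` matters.
  set s := q * m * m - 2 * p * m * n - r * n * n
  have hf₁ : -p * n + q * m = s * e₁ + n := by
    linear_combination (-(-p * n + q * m - n)) * hmn + n * (n * he₂ + m * he₁)
  have hf₂ : -r * n - p * m = s * e₂ - m := by
    linear_combination (-(-r * n - p * m + m)) * hmn - m * (n * he₂ + m * he₁)
  obtain ⟨k, hk | hk⟩ := Int.even_or_odd' s
  · obtain ⟨g, hg⟩ := GeneralLinearGroup.exists_conj_eq_of_mul_eq (v := reflection)
      !![e₁, -n - k * e₁; e₂, m - k * e₂]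
      (by rw [det_fin_two_of, show e₁ * (m - k * e₂) - (-n - k * e₁) * e₂ = 1 by
        linear_combination hmn]; exact isUnit_one) (by
      rw [hv', coe_reflection, mul_fin_two, mul_fin_two, of_fin_two_inj]
      exact ⟨by linear_combination he₁, by linear_combination hf₁ - k * he₁ + e₁ * hk,
        by linear_combination he₂, by linear_combination hf₂ - k * he₂ + e₂ * hk⟩)
    exact ⟨g, .inl hg⟩
  · obtain ⟨g, hg⟩ := GeneralLinearGroup.exists_conj_eq_of_mul_eq (v := rotation * reflection)
      !![-n - k * e₁, (k + 1) * e₁ + n; m - k * e₂, (k + 1) * e₂ - m]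
      (by rw [det_fin_two_of, show (-n - k * e₁) * ((k + 1) * e₂ - m) -
        ((k + 1) * e₁ + n) * (m - k * e₂) = -1 by linear_combination -hmn]
          exact isUnit_one.neg) (by
      rw [hv', coe_rotation_mul_reflection, mul_fin_two, mul_fin_two, of_fin_two_inj]
      exact ⟨by linear_combination hf₁ - k * he₁ + e₁ * hk,
        by linear_combination (k + 1) * he₁ - hf₁ - e₁ * hk,
        by linear_combination hf₂ - k * he₂ + e₂ * hk,
        by linear_combination (k + 1) * he₂ - hf₂ - e₂ * hk⟩)
    exact ⟨g, .inr hg⟩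

theorem rotation_mem_dihedral : rotation ∈ dihedral :=
  Subgroup.subset_closure (Set.mem_insert _ _)

theorem reflection_mem_dihedral : reflection ∈ dihedral :=
  Subgroup.subset_closure (Set.mem_insert_of_mem _ rfl)

theorem neg_mem_dihedral {k : GL₂ℤ} (hk : k ∈ dihedral) : -k ∈ dihedral := by
  rw [← neg_one_mul, ← rotation_sq]
  exact mul_mem (pow_mem rotation_mem_dihedral 2) hk

theorem mem_dihedral_of_trace_eq_zero {k : GL₂ℤ}
    (h₁ : (k : Matrix (Fin 2) (Fin 2) ℤ).trace = 0)
    (h₂ : ((k * rotation : GL₂ℤ) : Matrix (Fin 2) (Fin 2) ℤ).trace = 0) : k ∈ dihedral := by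
  obtain ⟨a, b, c, d, hk⟩ : ∃ a b c d, (k : Matrix (Fin 2) (Fin 2) ℤ) = !![a, b; c, d] :=
    ⟨_, _, _, _, eta_fin_two _⟩
  rw [Units.val_mul, hk, coe_rotation, mul_fin_two, trace_fin_two_of] at h₂
  rw [hk, trace_fin_two_of] at h₁
  obtain rfl : d = -a := by linarith
  obtain rfl : b = c := by linarith
  have hab : a * a + b * b = 1 := by
    obtain hd | hd := det_eq_one_or_neg_one k <;> rw [hk, det_fin_two_of] at hd <;> nlinarith
  have ha : -1 ≤ a ∧ a ≤ 1 := by constructor <;> nlinarith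
  have hb : -1 ≤ b ∧ b ≤ 1 := by constructor <;> nlinarith
  obtain ⟨g, hg, hkg⟩ : ∃ g ∈ dihedral, (k : Matrix (Fin 2) (Fin 2) ℤ) = g := by
    rw [hk]
    obtain ⟨ha₁, ha₂⟩ := ha
    obtain ⟨hb₁, hb₂⟩ := hb
    interval_cases a <;> interval_cases b <;> norm_num at hab
    · exact ⟨-reflection, neg_mem_dihedral reflection_mem_dihedral, by simp⟩
    · exact ⟨-(rotation * reflection), neg_mem_dihedral
        (mul_mem rotation_mem_dihedral reflection_mem_dihedral), by simp⟩
    · exact ⟨rotation * reflection, mul_mem rotation_mem_dihedral reflection_mem_dihedral,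
        by simp⟩
    · exact ⟨reflection, reflection_mem_dihedral, by simp⟩
  rwa [Units.ext hkg]

theorem mem_dihedral_of_sq_of_mul_rotation_sq {k : GL₂ℤ} (hk : k ^ 2 = 1 ∨ k ^ 2 = -1)
    (hkr : (k * rotation) ^ 2 = 1 ∨ (k * rotation) ^ 2 = -1) : k ∈ dihedral := by
  obtain rfl | rfl | ht := eq_one_or_eq_neg_one_or_trace_eq_zero hk
  · exact one_mem _
  · exact neg_mem_dihedral (one_mem _)
  obtain h | h | ht' := eq_one_or_eq_neg_one_or_trace_eq_zero hkr
  · rw [eq_inv_of_mul_eq_one_left h]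
    exact inv_mem rotation_mem_dihedral
  · rw [eq_mul_inv_of_mul_eq h, neg_one_mul]
    exact neg_mem_dihedral (inv_mem rotation_mem_dihedral)
  · exact mem_dihedral_of_trace_eq_zero ht ht'

theorem mem_dihedral_of_sq_eq_one_of_mul_sq_eq_one {k R : GL₂ℤ} (hR : R ∈ dihedral)
    (hRdet : (R : Matrix (Fin 2) (Fin 2) ℤ).det = -1) (hk : k ^ 2 = 1) (hkR : (k * R) ^ 2 = 1) :
    k ∈ dihedral := by
  by_cases hk₁ : k = 1 ∨ k = -1
  · obtain rfl | rfl := hk₁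
    exacts [one_mem _, neg_mem_dihedral (one_mem _)]
  rw [not_or] at hk₁
  have hdet := (trace_eq_zero_and_det_eq_neg_one_of_sq_eq_one hk hk₁.1 hk₁.2).2
  have hkR₁ : k * R = 1 ∨ k * R = -1 := by
    by_contra! hne
    have := (trace_eq_zero_and_det_eq_neg_one_of_sq_eq_one hkR hne.1 hne.2).2
    rw [Units.val_mul, det_mul, hdet, hRdet] at this
    norm_num at this
  obtain h | h := hkR₁
  · rw [eq_inv_of_mul_eq_one_left h]
    exact inv_mem hR
  · rw [eq_mul_inv_of_mul_eq h, neg_one_mul]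
    exact neg_mem_dihedral (inv_mem hR)

theorem exists_conj_mem_dihedral (H : Subgroup GL₂ℤ) (hH : ∀ h ∈ H, h ^ 2 = 1 ∨ h ^ 2 = -1) :
    ∃ g : GL₂ℤ, ∀ h ∈ H, g * h * g⁻¹ ∈ dihedral := by
  have hconj (g : GL₂ℤ) {h : GL₂ℤ} (hh : h ∈ H) :
      (g * h * g⁻¹) ^ 2 = 1 ∨ (g * h * g⁻¹) ^ 2 = -1 := by
    rw [conj_pow]
    obtain h₂ | h₂ := hH h hh <;> simp [h₂]
  by_cases hu : ∃ u ∈ H, u ^ 2 = -1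
  · obtain ⟨u, hu, hu₂⟩ := hu
    obtain ⟨g, hg⟩ := exists_conj_eq_rotation hu₂
    refine ⟨g, fun h hh ↦ mem_dihedral_of_sq_of_mul_rotation_sq (hconj g hh) ?_⟩
    rw [← hg, show g * h * g⁻¹ * (g * u * g⁻¹) = g * (h * u) * g⁻¹ by group]
    exact hconj g (mul_mem hh hu)
  have hH₁ (h : GL₂ℤ) (hh : h ∈ H) : h ^ 2 = 1 :=
    (hH h hh).resolve_right fun h₂ ↦ hu ⟨h, hh, h₂⟩
  by_cases hv : ∃ v ∈ H, v ≠ 1 ∧ v ≠ -1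
  · obtain ⟨v, hv, hv₁, hv₂⟩ := hv
    obtain ⟨g, hg⟩ := exists_conj_eq_reflection_or_rotation_mul_reflection (hH₁ v hv) hv₁ hv₂
    have hR : g * v * g⁻¹ ∈ dihedral ∧
        ((g * v * g⁻¹ : GL₂ℤ) : Matrix (Fin 2) (Fin 2) ℤ).det = -1 := by
      obtain hg | hg := hg <;> rw [hg]
      · exact ⟨reflection_mem_dihedral, by simp⟩
      · exact ⟨mul_mem rotation_mem_dihedral reflection_mem_dihedral, by simp⟩
    refine ⟨g, fun h hh ↦ mem_dihedral_of_sq_eq_one_of_mul_sq_eq_one hR.1 hR.2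
      (by rw [conj_pow, hH₁ h hh]; group) ?_⟩
    rw [show g * h * g⁻¹ * (g * v * g⁻¹) = g * (h * v) * g⁻¹ by group, conj_pow,
      hH₁ _ (mul_mem hh hv)]
    group
  refine ⟨1, fun h hh ↦ ?_⟩
  rw [one_mul, inv_one, mul_one]
  by_cases h₁ : h = 1
  · exact h₁ ▸ one_mem _
  · have : h = -1 := by by_contra h₂; exact hv ⟨h, hh, h₁, h₂⟩
    exact this ▸ neg_mem_dihedral (one_mem _)

end GL2Int

theorem stmt_5_general (H : Subgroup (Matrix.GeneralLinearGroup (Fin 2) ℤ))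
    (hH : IsPGroup 2 H) :
    ∃ A B : Matrix.GeneralLinearGroup (Fin 2) ℤ,
      (A : Matrix (Fin 2) (Fin 2) ℤ) = !![0, -1; 1, 0] ∧
      (B : Matrix (Fin 2) (Fin 2) ℤ) = !![1, 0; 0, -1] ∧
      ∃ g : Matrix.GeneralLinearGroup (Fin 2) ℤ,
        ∀ h ∈ H, g * h * g⁻¹ ∈ Subgroup.closure {A, B} := by
  obtain ⟨g, hg⟩ := GL2Int.exists_conj_mem_dihedral H fun h hh ↦ by
    obtain ⟨n, hn⟩ := hH ⟨h, hh⟩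
    exact GL2Int.sq_eq_one_or_neg_one_of_pow_two_pow_eq_one
      (by simpa using congrArg Subtype.val hn)
  exact ⟨GL2Int.rotation, GL2Int.reflection, rfl, rfl, g, hg⟩

theorem stmt_5 (H : Subgroup (Matrix.GeneralLinearGroup (Fin 2) ℤ))
    [Finite H] (hH : IsPGroup 2 H) :
    ∃ A B : Matrix.GeneralLinearGroup (Fin 2) ℤ,
      (A : Matrix (Fin 2) (Fin 2) ℤ) = !![0, -1; 1, 0] ∧
      (B : Matrix (Fin 2) (Fin 2) ℤ) = !![1, 0; 0, -1] ∧
      ∃ g : Matrix.GeneralLinearGroup (Fin 2) ℤ,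
        ∀ h ∈ H, g * h * g⁻¹ ∈ Subgroup.closure {A, B} :=
  stmt_5_general H hH
end

section
/- Let K be a field with char K ≠ 2, a, b ∈ K nonzero, and let σ be the K-automorphism of the rational function field K(x,y) defined by σ(x) = a/x, σ(y) = b/y. Setting u = (x − a/x)/(xy − ab/(xy)) and v = (y − b/y)/(xy − ab/(xy)), the fixed field K(x,y)^⟨σ⟩ equals K(u,v). -/
/-- The rational function field in two variables `x, y` over `K`. -/
noncomputable abbrev RatFunc2 (K : Type*) [Field K] : Type _ :=
  FractionRing (MvPolynomial (Fin 2) K)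

/-! Let `F = K(u, v)`; `σ` fixes `F`. The identities `(1 - v x) y = b u` and
`x² = c x - a` with `c = (1 + a v² - b u²) / v ∈ F` show that `K(x, y) = F(x)` with `x` quadratic
over `F`, so every element is `p + q x` with `p, q ∈ F`. Then `σ (p + q x) = p + q a / x`, which
equals `p + q x` only if `q = 0`, because `x² ≠ a`. -/

open IntermediateField MvPolynomial

section InvariantQuotient

variable {E : Type*} [Field E]

/-- The paper's `u` is `invariantQuotient a b x y`, and its `v` is `invariantQuotient b a y x`. -/
def invariantQuotient (a b x y : E) : E := (x - a / x) / (x * y - a * b / (x * y))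

theorem map_invariantQuotient {E' R : Type*} [Field E'] [FunLike R E E'] [RingHomClass R E E']
    (f : R) (a b x y : E) :
    f (invariantQuotient a b x y) = invariantQuotient (f a) (f b) (f x) (f y) := by
  simp only [invariantQuotient, map_div₀, map_sub, map_mul]

variable {a b x y : E}

theorem invariantQuotient_eq (hx : x ≠ 0) (hy : y ≠ 0) :
    invariantQuotient a b x y = (x ^ 2 - a) * y / (x ^ 2 * y ^ 2 - a * b) := by
  rw [invariantQuotient, ← mul_div_mul_right _ _ (mul_ne_zero hx hy)]
  congr 1 <;> field_simp

theorem invariantQuotient_swap_eq (hx : x ≠ 0) (hy : y ≠ 0) :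
    invariantQuotient b a y x = (y ^ 2 - b) * x / (x ^ 2 * y ^ 2 - a * b) := by
  rw [invariantQuotient_eq hy hx, mul_comm (y ^ 2), mul_comm b]

theorem invariantQuotient_div_div (ha : a ≠ 0) (hb : b ≠ 0) (hx : x ≠ 0) (hy : y ≠ 0) :
    invariantQuotient a b (a / x) (b / y) = invariantQuotient a b x y := by
  rw [invariantQuotient, invariantQuotient, ← neg_div_neg_eq]
  congr 1 <;> field_simp <;> ring

theorem invariantQuotient_ne_zero (hx : x ≠ 0) (hy : y ≠ 0) (hxx : x ^ 2 ≠ a)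
    (hxy : x ^ 2 * y ^ 2 ≠ a * b) : invariantQuotient a b x y ≠ 0 := by
  rw [invariantQuotient_eq hx hy]
  exact div_ne_zero (mul_ne_zero (sub_ne_zero.2 hxx) hy) (sub_ne_zero.2 hxy)

theorem eq_div_one_sub_invariantQuotient_mul (hb : b ≠ 0) (hx : x ≠ 0) (hy : y ≠ 0)
    (hxx : x ^ 2 ≠ a) (hxy : x ^ 2 * y ^ 2 ≠ a * b) :
    y = b * invariantQuotient a b x y / (1 - invariantQuotient b a y x * x) := by
  have hu := invariantQuotient_ne_zero hx hy hxx hxy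
  have key : (1 - invariantQuotient b a y x * x) * y = b * invariantQuotient a b x y := by
    have hD : y ^ 2 * x ^ 2 - b * a ≠ 0 := by rwa [sub_ne_zero, mul_comm b, mul_comm (y ^ 2)]
    rw [invariantQuotient_eq hx hy, invariantQuotient_swap_eq hx hy]
    field_simp
    ring
  have hvx : 1 - invariantQuotient b a y x * x ≠ 0 := by
    rintro h
    rw [h, zero_mul, eq_comm] at key
    exact mul_ne_zero hb hu key
  rw [eq_div_iff hvx, mul_comm, key]

theorem sq_eq_of_invariantQuotient (hx : x ≠ 0) (hy : y ≠ 0) (hyy : y ^ 2 ≠ b)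
    (hxy : x ^ 2 * y ^ 2 ≠ a * b) :
    x ^ 2 = (1 + a * invariantQuotient b a y x ^ 2 - b * invariantQuotient a b x y ^ 2) /
      invariantQuotient b a y x * x + -a := by
  have hD : x ^ 2 * y ^ 2 - a * b ≠ 0 := sub_ne_zero.2 hxy
  have hv : invariantQuotient b a y x ≠ 0 := by
    rw [invariantQuotient_swap_eq hx hy]
    exact div_ne_zero (mul_ne_zero (sub_ne_zero.2 hyy) hx) hD
  rw [eq_add_neg_iff_add_eq, div_mul_eq_mul_div, eq_div_iff hv, invariantQuotient_eq hx hy,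
    invariantQuotient_swap_eq hx hy]
  field_simp
  ring

end InvariantQuotient

theorem AlgEquiv.apply_eq_self_of_mem_adjoin {K E : Type*} [Field K] [Field E] [Algebra K E]
    (σ : E ≃ₐ[K] E) {S : Set E} (hS : ∀ s ∈ S, σ s = s) {z : E} (hz : z ∈ adjoin K S) :
    σ z = z := by
  induction hz using IntermediateField.adjoin_induction with
  | mem s hs => exact hS s hs
  | algebraMap c => exact σ.commutes c
  | add s t _ _ hs ht => rw [map_add, hs, ht]
  | inv s _ hs => rw [map_inv₀, hs]
  | mul s t _ _ hs ht => rw [map_mul, hs, ht]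

section Quadratic

variable {K E : Type*} [Field K] [Field E] [Algebra K E] {F : IntermediateField K E}
  {x c d : E}

theorem IntermediateField.exists_eq_add_mul_of_mem_adjoin_simple (hc : c ∈ F) (hd : d ∈ F)
    (hx : x ^ 2 = c * x + d) {z : E} (hz : z ∈ F⟮x⟯) : ∃ p ∈ F, ∃ q ∈ F, z = p + q * x := by
  have hint : IsIntegral F x := by
    refine ⟨.X ^ 2 - (.C ⟨c, hc⟩ * .X + .C ⟨d, hd⟩), Polynomial.monic_X_pow_sub ?_, ?_⟩
    · exact Polynomial.degree_linear_le.trans_lt (by norm_num)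
    · simp only [Polynomial.eval₂_sub, Polynomial.eval₂_add, Polynomial.eval₂_mul,
        Polynomial.eval₂_pow, Polynomial.eval₂_X, Polynomial.eval₂_C]
      exact sub_eq_zero.2 hx
  rw [← mem_toSubalgebra, adjoin_simple_toSubalgebra_of_isAlgebraic hint.isAlgebraic] at hz
  induction hz using Algebra.adjoin_induction with
  | mem t ht =>
    rw [Set.mem_singleton_iff.1 ht]
    exact ⟨0, zero_mem F, 1, one_mem F, by ring⟩
  | algebraMap r => exact ⟨r, r.2, 0, zero_mem F, by simp⟩
  | add s t _ _ hs ht =>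
    obtain ⟨p, hp, q, hq, rfl⟩ := hs
    obtain ⟨p', hp', q', hq', rfl⟩ := ht
    exact ⟨p + p', add_mem hp hp', q + q', add_mem hq hq', by ring⟩
  | mul s t _ _ hs ht =>
    obtain ⟨p, hp, q, hq, rfl⟩ := hs
    obtain ⟨p', hp', q', hq', rfl⟩ := ht
    refine ⟨p * p' + q * q' * d, add_mem (mul_mem hp hp') (mul_mem (mul_mem hq hq') hd),
      p * q' + q * p' + q * q' * c,
      add_mem (add_mem (mul_mem hp hq') (mul_mem hq hp')) (mul_mem (mul_mem hq hq') hc), ?_⟩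
    linear_combination (q * q') * hx

theorem IntermediateField.mem_of_apply_eq_self_of_mem_adjoin_simple {σ : E ≃ₐ[K] E}
    (hσF : ∀ w ∈ F, σ w = w) (hc : c ∈ F) (hd : d ∈ F) (hx : x ^ 2 = c * x + d)
    (hσx : σ x ≠ x) {z : E} (hz : z ∈ F⟮x⟯) (hσz : σ z = z) : z ∈ F := by
  obtain ⟨p, hp, q, hq, rfl⟩ := exists_eq_add_mul_of_mem_adjoin_simple hc hd hx hz
  rw [map_add, map_mul, hσF p hp, hσF q hq, add_right_inj] at hσz
  obtain rfl : q = 0 := by_contra fun hq0 ↦ hσx (mul_left_cancel₀ hq0 hσz)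
  rwa [zero_mul, add_zero]

end Quadratic

theorem MvPolynomial.adjoin_range_algebraMap_X_eq_top (K ι : Type*) [Field K] :
    adjoin K (Set.range fun i ↦
      algebraMap (MvPolynomial ι K) (FractionRing (MvPolynomial ι K)) (X i)) = ⊤ := by
  set φ := IsScalarTower.toAlgHom K (MvPolynomial ι K) (FractionRing (MvPolynomial ι K))
  have hpoly (p : MvPolynomial ι K) : φ p ∈ adjoin K (Set.range fun i ↦ φ (X i)) := by
    apply algebra_adjoin_le_adjoin
    rw [Set.range_comp' φ X, Algebra.adjoin_image, adjoin_range_X]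
    exact Subalgebra.mem_map.2 ⟨p, trivial, rfl⟩
  refine eq_top_iff.2 fun w _ ↦ ?_
  obtain ⟨p, q, -, rfl⟩ := IsFractionRing.div_surjective (A := MvPolynomial ι K) w
  exact div_mem (hpoly p) (hpoly q)

theorem MvPolynomial.algebraMap_fractionRing_ne_algebraMap {K ι : Type*} [Field K]
    {p : MvPolynomial ι K} (hp : constantCoeff p = 0) {c : K} (hc : c ≠ 0) :
    algebraMap _ (FractionRing (MvPolynomial ι K)) p ≠ algebraMap K _ c := by
  rw [IsScalarTower.algebraMap_apply K (MvPolynomial ι K), Ne,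
    (IsFractionRing.injective _ _).eq_iff, algebraMap_eq]
  exact fun h ↦ hc (by simpa [hp] using (congrArg constantCoeff h).symm)

section FixedField

variable {K E : Type*} [Field K] [Field E] [Algebra K E] {a b : K} {x y : E}
  {σ : E ≃ₐ[K] E}

theorem apply_eq_self_of_mem_adjoin_invariantQuotient (ha : a ≠ 0) (hb : b ≠ 0) (hx : x ≠ 0)
    (hy : y ≠ 0) (hσx : σ x = algebraMap K E a / x) (hσy : σ y = algebraMap K E b / y) {z : E}
    (hz : z ∈ adjoin K {invariantQuotient (algebraMap K E a) (algebraMap K E b) x y,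
      invariantQuotient (algebraMap K E b) (algebraMap K E a) y x}) :
    σ z = z := by
  have hιa : algebraMap K E a ≠ 0 := (map_ne_zero _).2 ha
  have hιb : algebraMap K E b ≠ 0 := (map_ne_zero _).2 hb
  refine σ.apply_eq_self_of_mem_adjoin ?_ hz
  rintro _ (rfl | rfl)
  · rw [map_invariantQuotient, σ.commutes, σ.commutes, hσx, hσy,
      invariantQuotient_div_div hιa hιb hx hy]
  · rw [map_invariantQuotient, σ.commutes, σ.commutes, hσx, hσy,
      invariantQuotient_div_div hιb hιa hy hx]

theorem mem_adjoin_invariantQuotient_of_apply_eq_self (ha : a ≠ 0) (hb : b ≠ 0)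
    (hgen : adjoin K {x, y} = ⊤) (hx : x ≠ 0) (hy : y ≠ 0) (hxx : x ^ 2 ≠ algebraMap K E a)
    (hyy : y ^ 2 ≠ algebraMap K E b)
    (hxy : x ^ 2 * y ^ 2 ≠ algebraMap K E a * algebraMap K E b)
    (hσx : σ x = algebraMap K E a / x) (hσy : σ y = algebraMap K E b / y) {z : E}
    (hz : σ z = z) :
    z ∈ adjoin K {invariantQuotient (algebraMap K E a) (algebraMap K E b) x y,
      invariantQuotient (algebraMap K E b) (algebraMap K E a) y x} := by
  set u := invariantQuotient (algebraMap K E a) (algebraMap K E b) x y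
  set v := invariantQuotient (algebraMap K E b) (algebraMap K E a) y x
  set F := adjoin K {u, v}
  have huF : u ∈ F := subset_adjoin K _ (Set.mem_insert u {v})
  have hvF : v ∈ F := subset_adjoin K _ (Set.mem_insert_of_mem u rfl)
  have hFx (w : E) (hw : w ∈ F) : w ∈ F⟮x⟯ := (F⟮x⟯).algebraMap_mem ⟨w, hw⟩
  have hyFx : y ∈ F⟮x⟯ := by
    rw [eq_div_one_sub_invariantQuotient_mul ((map_ne_zero _).2 hb) hx hy hxx hxy]
    exact div_mem (mul_mem (hFx _ (F.algebraMap_mem b)) (hFx u huF))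
      (sub_mem (one_mem _) (mul_mem (hFx v hvF) (mem_adjoin_simple_self F x)))
  have hFx_top : adjoin K {x, y} ≤ F⟮x⟯.restrictScalars K :=
    adjoin_le_iff.2 <| Set.insert_subset_iff.2
      ⟨mem_adjoin_simple_self F x, Set.singleton_subset_iff.2 hyFx⟩
  refine mem_of_apply_eq_self_of_mem_adjoin_simple
    (fun w ↦ apply_eq_self_of_mem_adjoin_invariantQuotient ha hb hx hy hσx hσy)
    ?_ (neg_mem (F.algebraMap_mem a)) (sq_eq_of_invariantQuotient hx hy hyy hxy) ?_
    (hFx_top (hgen ▸ trivial)) hz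
  · exact div_mem (sub_mem (add_mem (one_mem F) (mul_mem (F.algebraMap_mem a) (pow_mem hvF 2)))
      (mul_mem (F.algebraMap_mem b) (pow_mem huF 2))) hvF
  · rw [hσx]
    exact fun h ↦ hxx (by rw [sq, ← (div_eq_iff hx).1 h])

end FixedField

theorem stmt_6_general (K : Type*) [Field K]
    (a b : K) (ha : a ≠ 0) (hb : b ≠ 0)
    (x y u v : RatFunc2 K)
    (hx : x = algebraMap (MvPolynomial (Fin 2) K) (RatFunc2 K) (MvPolynomial.X 0))
    (hy : y = algebraMap (MvPolynomial (Fin 2) K) (RatFunc2 K) (MvPolynomial.X 1))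
    (σ : RatFunc2 K ≃ₐ[K] RatFunc2 K)
    (hσx : σ x = algebraMap K (RatFunc2 K) a / x)
    (hσy : σ y = algebraMap K (RatFunc2 K) b / y)
    (hu : u = (x - algebraMap K (RatFunc2 K) a / x) /
      (x * y - algebraMap K (RatFunc2 K) (a * b) / (x * y)))
    (hv : v = (y - algebraMap K (RatFunc2 K) b / y) /
      (x * y - algebraMap K (RatFunc2 K) (a * b) / (x * y))) :
    ∀ z : RatFunc2 K, σ z = z ↔ z ∈ IntermediateField.adjoin K {u, v} := by
  set ι := algebraMap K (RatFunc2 K)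
  have hφ := IsFractionRing.injective (MvPolynomial (Fin 2) K) (RatFunc2 K)
  have hx0 : x ≠ 0 := hx ▸ (map_ne_zero_iff _ hφ).2 (X_ne_zero 0)
  have hy0 : y ≠ 0 := hy ▸ (map_ne_zero_iff _ hφ).2 (X_ne_zero 1)
  have hxx : x ^ 2 ≠ ι a := by
    rw [hx, ← map_pow]; exact algebraMap_fractionRing_ne_algebraMap (by simp) ha
  have hyy : y ^ 2 ≠ ι b := by
    rw [hy, ← map_pow]; exact algebraMap_fractionRing_ne_algebraMap (by simp) hb
  have hxy : x ^ 2 * y ^ 2 ≠ ι a * ι b := by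
    rw [hx, hy, ← map_pow, ← map_pow, ← map_mul, ← map_mul]
    exact algebraMap_fractionRing_ne_algebraMap (by simp) (mul_ne_zero ha hb)
  have hgen : adjoin K {x, y} = ⊤ := by
    refine top_le_iff.1 ((adjoin_range_algebraMap_X_eq_top K (Fin 2)).symm.trans_le ?_)
    exact adjoin_le_iff.2 <| Set.range_subset_iff.2 <| Fin.forall_fin_two.2
      ⟨hx ▸ subset_adjoin K _ (Set.mem_insert x {y}),
        hy ▸ subset_adjoin K _ (Set.mem_insert_of_mem x rfl)⟩
  have huv : ({u, v} : Set (RatFunc2 K)) =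
      {invariantQuotient (ι a) (ι b) x y, invariantQuotient (ι b) (ι a) y x} := by
    rw [hu, hv, invariantQuotient, invariantQuotient, map_mul, mul_comm y, mul_comm (ι b)]
  rw [huv]
  exact fun z ↦ ⟨mem_adjoin_invariantQuotient_of_apply_eq_self ha hb hgen hx0 hy0 hxx hyy hxy
    hσx hσy, apply_eq_self_of_mem_adjoin_invariantQuotient ha hb hx0 hy0 hσx hσy⟩

theorem stmt_6 (K : Type*) [Field K] (hK2 : ringChar K ≠ 2)
    (a b : K) (ha : a ≠ 0) (hb : b ≠ 0)
    (x y u v : RatFunc2 K)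
    (hx : x = algebraMap (MvPolynomial (Fin 2) K) (RatFunc2 K) (MvPolynomial.X 0))
    (hy : y = algebraMap (MvPolynomial (Fin 2) K) (RatFunc2 K) (MvPolynomial.X 1))
    (σ : RatFunc2 K ≃ₐ[K] RatFunc2 K)
    (hσx : σ x = algebraMap K (RatFunc2 K) a / x)
    (hσy : σ y = algebraMap K (RatFunc2 K) b / y)
    (hu : u = (x - algebraMap K (RatFunc2 K) a / x) /
      (x * y - algebraMap K (RatFunc2 K) (a * b) / (x * y)))
    (hv : v = (y - algebraMap K (RatFunc2 K) b / y) /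
      (x * y - algebraMap K (RatFunc2 K) (a * b) / (x * y))) :
    ∀ z : RatFunc2 K, σ z = z ↔ z ∈ IntermediateField.adjoin K {u, v} :=
  stmt_6_general K a b ha hb x y u v hx hy σ hσx hσy hu hv
end

section
/- With K, a, b, σ, u, v as in the previous setting (σ(x)=a/x, σ(y)=b/y, u = (x − a/x)/(xy − ab/(xy)), v = (y − b/y)/(xy − ab/(xy))), the following identities hold: x + a/x = (−bu² + av² + 1)/v, y + b/y = (bu² − av² + 1)/u, and xy + ab/(xy) = (−bu² − av² + 1)/(uv). -/
theorem sub_div_ne_zero_of_sq_ne {L : Type*} [DivisionRing L] {z c : L} (hz : z ≠ 0)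
    (hzc : z ^ 2 ≠ c) : z - c / z ≠ 0 := by
  rwa [sub_ne_zero, ne_eq, eq_div_iff hz, ← sq]

theorem add_div_eq_of_eq_div_of_eq_div {L : Type*} [Field L] {A B x y u v : L}
    (hx : x ≠ 0) (hy : y ≠ 0) (hxA : x ^ 2 ≠ A) (hyB : y ^ 2 ≠ B)
    (hxyAB : (x * y) ^ 2 ≠ A * B)
    (hu : u = (x - A / x) / (x * y - A * B / (x * y)))
    (hv : v = (y - B / y) / (x * y - A * B / (x * y))) :
    x + A / x = (-B * u ^ 2 + A * v ^ 2 + 1) / v ∧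
    y + B / y = (B * u ^ 2 - A * v ^ 2 + 1) / u ∧
    x * y + A * B / (x * y) = (-B * u ^ 2 - A * v ^ 2 + 1) / (u * v) := by
  set p := x - A / x
  set q := y - B / y
  set D := x * y - A * B / (x * y)
  have hp : p ≠ 0 := sub_div_ne_zero_of_sq_ne hx hxA
  have hq : q ≠ 0 := sub_div_ne_zero_of_sq_ne hy hyB
  have hD : D ≠ 0 := sub_div_ne_zero_of_sq_ne (mul_ne_zero hx hy) hxyAB
  subst hu hv
  -- Clear `p`, `q`, `D` while they are still atoms; then only `x` and `y` remain as denominators.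
  refine ⟨?_, ?_, ?_⟩ <;> rw [eq_div_iff (by simp [hp, hq, hD])] <;> field_simp <;>
    simp only [p, q, D] <;> field_simp <;> ring

namespace MvPolynomial

variable {σ K : Type*} [Field K]

theorem ne_C_of_totalDegree_ne_zero {p : MvPolynomial σ K} (hp : p.totalDegree ≠ 0) (c : K) :
    p ≠ C c := by
  rintro rfl
  exact hp (totalDegree_C c)

theorem algebraMap_fractionRing_ne_algebraMap_s7 {p : MvPolynomial σ K} (hp : p.totalDegree ≠ 0)
    (c : K) : algebraMap _ (FractionRing (MvPolynomial σ K)) p ≠ algebraMap K _ c := by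
  rw [IsScalarTower.algebraMap_apply K (MvPolynomial σ K), algebraMap_eq]
  exact (IsFractionRing.injective _ _).ne (ne_C_of_totalDegree_ne_zero hp c)

end MvPolynomial

open MvPolynomial in
theorem stmt_7_general (K : Type*) [Field K]
    (a b : K)
    (x y u v : RatFunc2 K)
    (hx : x = algebraMap (MvPolynomial (Fin 2) K) (RatFunc2 K) (MvPolynomial.X 0))
    (hy : y = algebraMap (MvPolynomial (Fin 2) K) (RatFunc2 K) (MvPolynomial.X 1))
    (hu : u = (x - algebraMap K (RatFunc2 K) a / x) /
      (x * y - algebraMap K (RatFunc2 K) (a * b) / (x * y)))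
    (hv : v = (y - algebraMap K (RatFunc2 K) b / y) /
      (x * y - algebraMap K (RatFunc2 K) (a * b) / (x * y))) :
    x + algebraMap K (RatFunc2 K) a / x
        = (-(algebraMap K (RatFunc2 K) b) * u ^ 2
            + algebraMap K (RatFunc2 K) a * v ^ 2 + 1) / v ∧
    y + algebraMap K (RatFunc2 K) b / y
        = (algebraMap K (RatFunc2 K) b * u ^ 2
            - algebraMap K (RatFunc2 K) a * v ^ 2 + 1) / u ∧
    x * y + algebraMap K (RatFunc2 K) (a * b) / (x * y)
        = (-(algebraMap K (RatFunc2 K) b) * u ^ 2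
            - algebraMap K (RatFunc2 K) a * v ^ 2 + 1) / (u * v) := by
  have hX (i : Fin 2) : (X i : MvPolynomial (Fin 2) K) ^ 2 ≠ 0 := pow_ne_zero 2 (X_ne_zero i)
  have hxy : x * y ≠ 0 := by
    rw [hx, hy, ← map_mul]
    exact (map_ne_zero_iff _ (IsFractionRing.injective _ _)).mpr
      (mul_ne_zero (X_ne_zero 0) (X_ne_zero 1))
  rw [map_mul] at hu hv ⊢
  refine add_div_eq_of_eq_div_of_eq_div (left_ne_zero_of_mul hxy) (right_ne_zero_of_mul hxy)
    ?_ ?_ ?_ hu hv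
  · rw [hx, ← map_pow]
    exact algebraMap_fractionRing_ne_algebraMap_s7 (by simp [totalDegree_X_pow]) a
  · rw [hy, ← map_pow]
    exact algebraMap_fractionRing_ne_algebraMap_s7 (by simp [totalDegree_X_pow]) b
  · rw [hx, hy, ← map_mul, ← map_pow, mul_pow, ← map_mul]
    refine algebraMap_fractionRing_ne_algebraMap_s7 ?_ (a * b)
    rw [totalDegree_mul_of_isDomain (hX 0) (hX 1)]
    simp [totalDegree_X_pow]

theorem stmt_7 (K : Type*) [Field K] (hK2 : ringChar K ≠ 2)
    (a b : K) (ha : a ≠ 0) (hb : b ≠ 0)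
    (x y u v : RatFunc2 K)
    (hx : x = algebraMap (MvPolynomial (Fin 2) K) (RatFunc2 K) (MvPolynomial.X 0))
    (hy : y = algebraMap (MvPolynomial (Fin 2) K) (RatFunc2 K) (MvPolynomial.X 1))
    (hu : u = (x - algebraMap K (RatFunc2 K) a / x) /
      (x * y - algebraMap K (RatFunc2 K) (a * b) / (x * y)))
    (hv : v = (y - algebraMap K (RatFunc2 K) b / y) /
      (x * y - algebraMap K (RatFunc2 K) (a * b) / (x * y))) :
    x + algebraMap K (RatFunc2 K) a / x
        = (-(algebraMap K (RatFunc2 K) b) * u ^ 2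
            + algebraMap K (RatFunc2 K) a * v ^ 2 + 1) / v ∧
    y + algebraMap K (RatFunc2 K) b / y
        = (algebraMap K (RatFunc2 K) b * u ^ 2
            - algebraMap K (RatFunc2 K) a * v ^ 2 + 1) / u ∧
    x * y + algebraMap K (RatFunc2 K) (a * b) / (x * y)
        = (-(algebraMap K (RatFunc2 K) b) * u ^ 2
            - algebraMap K (RatFunc2 K) a * v ^ 2 + 1) / (u * v) :=
  stmt_7_general K a b x y u v hx hy hu hv
end

section
/- With the same setting (a,b nonzero elements of a field K of characteristic ≠ 2, u = (x − a/x)/(xy − ab/(xy)), v = (y − b/y)/(xy − ab/(xy)) in K(x,y)), the identity (x − a/x)/(bx/y − ay/x) = u/(bu² − av²) holds in K(x,y). -/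
set_option maxHeartbeats 2000000


theorem stmt_8 (K : Type*) [Field K] (hK2 : ringChar K ≠ 2)
    (a b : K) (ha : a ≠ 0) (hb : b ≠ 0)
    (x y u v : RatFunc2 K)
    (hx : x = algebraMap (MvPolynomial (Fin 2) K) (RatFunc2 K) (MvPolynomial.X 0))
    (hy : y = algebraMap (MvPolynomial (Fin 2) K) (RatFunc2 K) (MvPolynomial.X 1))
    (hu : u = (x - algebraMap K (RatFunc2 K) a / x) /
      (x * y - algebraMap K (RatFunc2 K) (a * b) / (x * y)))
    (hv : v = (y - algebraMap K (RatFunc2 K) b / y) /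
      (x * y - algebraMap K (RatFunc2 K) (a * b) / (x * y))) :
    (x - algebraMap K (RatFunc2 K) a / x) /
        (algebraMap K (RatFunc2 K) b * x / y - algebraMap K (RatFunc2 K) a * y / x)
      = u / (algebraMap K (RatFunc2 K) b * u ^ 2
          - algebraMap K (RatFunc2 K) a * v ^ 2) := by
  have inj : Function.Injective (algebraMap (MvPolynomial (Fin 2) K) (RatFunc2 K)) :=
    IsFractionRing.injective _ _
  have hx0 : x ≠ 0 := by
    rw [hx, ne_eq, map_eq_zero_iff _ inj]
    exact MvPolynomial.X_ne_zero 0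
  have hy0 : y ≠ 0 := by
    rw [hy, ne_eq, map_eq_zero_iff _ inj]
    exact MvPolynomial.X_ne_zero 1
  have hxy0 : x * y ≠ 0 := mul_ne_zero hx0 hy0
  -- transcendence: (xy)^2 ≠ ab
  have hpoly : (MvPolynomial.X 0 * MvPolynomial.X 1 : MvPolynomial (Fin 2) K) ^ 2
      - MvPolynomial.C (a * b) ≠ 0 := by
    intro h
    have h2 := congrArg (MvPolynomial.aeval (![Polynomial.X, 1] : Fin 2 → Polynomial K)) h
    simp [sub_eq_zero] at h2
    have := congrArg (fun p => Polynomial.coeff p 2) h2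
    simp [Polynomial.coeff_X_pow] at this
  have hsq : (x * y) ^ 2 ≠ algebraMap K (RatFunc2 K) (a * b) := by
    intro h
    apply hpoly
    apply inj
    rw [map_sub, map_pow, map_mul, map_zero, ← MvPolynomial.algebraMap_eq,
      ← IsScalarTower.algebraMap_apply K (MvPolynomial (Fin 2) K) (RatFunc2 K), sub_eq_zero]
    rw [hx, hy] at h
    exact h
  have hD : x * y - algebraMap K (RatFunc2 K) (a * b) / (x * y) ≠ 0 := by
    intro h
    rw [sub_eq_zero, eq_div_iff hxy0, ← sq] at h
    exact hsq h
  have hE : (x * y) ^ 2 - algebraMap K (RatFunc2 K) (a * b) ≠ 0 := sub_ne_zero.mpr hsq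
  have hDrw : x * y - algebraMap K (RatFunc2 K) (a * b) / (x * y)
      = ((x * y) ^ 2 - algebraMap K (RatFunc2 K) (a * b)) / (x * y) := by
    field_simp
  -- key identity
  have key : algebraMap K (RatFunc2 K) b * u ^ 2 - algebraMap K (RatFunc2 K) a * v ^ 2
      = (algebraMap K (RatFunc2 K) b * x / y - algebraMap K (RatFunc2 K) a * y / x)
        / (x * y - algebraMap K (RatFunc2 K) (a * b) / (x * y)) := by
    rw [hu, hv, hDrw]
    obtain ⟨E, hEdef⟩ : ∃ E, E = (x * y) ^ 2 - algebraMap K (RatFunc2 K) (a * b) :=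
      ⟨_, rfl⟩
    have hE' : E ≠ 0 := hEdef ▸ hE
    rw [← hEdef]
    field_simp
    rw [hEdef, map_mul]
    ring
  rw [key, hu, div_div_div_cancel_right₀]
  exact hD
end

section
/- Let G be a finite p-group whose center Z(G) is cyclic. Then G has a faithful irreducible complex representation. -/
/-!
A nontrivial normal subgroup of a `p`-group meets the centre nontrivially, so it contains an
element of order `p` of the centre; the centre being cyclic, that element generates the same
subgroup as a fixed central `z` of order `p`. Hence `z` lies in every nontrivial normal subgroup.
By Maschke, `ℂ[G]` is the sum of its simple submodules, and `z` acts nontrivially on `ℂ[G]`, so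
it acts nontrivially on some simple submodule `W`. The kernel of `W` is then a normal subgroup not
containing `z`, hence trivial.
-/

open CategoryTheory
open scoped MonoidAlgebra

universe u

open Subgroup in
theorem IsCyclic.mem_zpowers_of_orderOf_eq {α : Type*} [Group α] [Finite α] [IsCyclic α]
    {a b : α} (h : orderOf b = orderOf a) : b ∈ zpowers a := by
  classical
  have := Fintype.ofFinite α
  have hsub : (zpowers a : Set α).toFinset ⊆ ({x | x ^ orderOf a = 1} : Finset α) := by
    intro x hx
    simpa using
      orderOf_dvd_iff_pow_eq_one.mp (orderOf_dvd_of_mem_zpowers (Set.mem_toFinset.mp hx))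
  -- A cyclic group has at most `n` solutions of `x ^ n = 1`, and `zpowers a` already has `n`.
  have heq := Finset.eq_of_subset_of_card_le hsub <| by
    rw [Set.toFinset_card, ← Nat.card_eq_fintype_card, SetLike.coe_sort_coe, Nat.card_zpowers]
    exact IsCyclic.card_pow_eq_one_le (orderOf_pos a)
  have hb : b ∈ ({x | x ^ orderOf a = 1} : Finset α) := by simp [← h]
  simpa [← heq] using hb

namespace IsPGroup

variable {p : ℕ} [Fact p.Prime] {G : Type*} [Group G] (hG : IsPGroup p G)
include hG

theorem prime_dvd_card_of_ne_bot {H : Subgroup G} (hH : H ≠ ⊥) : p ∣ Nat.card H :=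
  (hG.to_subgroup H).card_eq_or_dvd.resolve_left (by rwa [Subgroup.card_eq_one])

theorem inf_center_ne_bot [Finite G] {N : Subgroup G} [N.Normal] (hN : N ≠ ⊥) :
    N ⊓ Subgroup.center G ≠ ⊥ := by
  have hfix : (1 : N) ∈ MulAction.fixedPoints (ConjAct G) N := fun g ↦ by ext; simp
  obtain ⟨b, hb, hb1⟩ :=
    (hG.of_equiv ConjAct.toConjAct).exists_fixed_point_of_prime_dvd_card_of_fixed_point N
      (hG.prime_dvd_card_of_ne_bot hN) hfix
  have hbc : (b : G) ∈ (Subgroup.center G : Set G) := by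
    rw [← ConjAct.fixedPoints_eq_center]
    intro g
    rw [← ConjAct.Subgroup.val_conj_smul, hb g]
  rw [Ne, Subgroup.eq_bot_iff_forall]
  push Not
  exact ⟨b, ⟨b.2, hbc⟩, fun h ↦ hb1 (Subtype.ext h.symm)⟩

theorem exists_mem_center_mem_of_normal_ne_bot [Finite G] [Nontrivial G]
    [IsCyclic (Subgroup.center G)] :
    ∃ z ∈ Subgroup.center G, z ≠ 1 ∧
      ∀ N : Subgroup G, N.Normal → N ≠ ⊥ → z ∈ N := by
  obtain ⟨z, hz⟩ := exists_prime_orderOf_dvd_card' (G := Subgroup.center G) p <|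
    hG.prime_dvd_card_of_ne_bot hG.bot_lt_center.ne'
  refine ⟨z, z.2, fun h ↦ ?_, fun N _ hN ↦ ?_⟩
  · rw [← Subgroup.orderOf_coe, h, orderOf_one] at hz
    exact (Fact.out : p.Prime).one_lt.ne hz
  · obtain ⟨y, hy⟩ := exists_prime_orderOf_dvd_card' (G := ↥(N ⊓ Subgroup.center G)) p <|
      hG.prime_dvd_card_of_ne_bot (hG.inf_center_ne_bot hN)
    have hzy : z ∈ Subgroup.zpowers (⟨y, y.2.2⟩ : Subgroup.center G) :=
      IsCyclic.mem_zpowers_of_orderOf_eq <| by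
        rw [hz, Subgroup.orderOf_mk, Subgroup.orderOf_coe, hy]
    have := Subgroup.mem_map_of_mem (Subgroup.center G).subtype hzy
    rw [MonoidHom.map_zpowers] at this
    exact Subgroup.zpowers_le_of_mem y.2.1 this

end IsPGroup

theorem IsSemisimpleModule.exists_isSimpleModule_not_le {R M : Type*} [Ring R] [AddCommGroup M]
    [Module R M] [IsSemisimpleModule R M] {N : Submodule R M} (hN : N ≠ ⊤) :
    ∃ m : Submodule R M, IsSimpleModule R m ∧ ¬m ≤ N := by
  by_contra! h
  exact hN (top_le_iff.mp (sSup_simples_eq_top R M ▸ sSup_le h))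

theorem MonoidAlgebra.exists_isSimpleModule_single_smul_ne {k G : Type*} [Field k] [Group G]
    [Finite G] [NeZero (Nat.card G : k)] {z : G} (hz : z ∈ Subgroup.center G) (hz1 : z ≠ 1) :
    ∃ W : Submodule k[G] k[G], IsSimpleModule k[G] W ∧ ∃ w : W, single z (1 : k) • w ≠ w := by
  set c : k[G] := single z 1
  have hc : ∀ a : k[G], a * c = c * a := fun a ↦
    (single_commute (fun g ↦ (Subgroup.mem_center_iff.mp hz g).symm)
      (Commute.one_left ·) a).eq.symm
  -- Right multiplication by `c` is `k[G]`-linear, and it agrees with left multiplication by `hc`.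
  let P : Submodule k[G] k[G] :=
    LinearMap.eqLocus (LinearMap.toSpanSingleton k[G] k[G] c) LinearMap.id
  have hP : P ≠ ⊤ := by
    intro h
    have h1 : (1 : k[G]) ∈ P := h ▸ Submodule.mem_top
    exact hz1 (by simpa [P, c, one_def, single_left_inj one_ne_zero] using h1)
  obtain ⟨W, hW, hWP⟩ := IsSemisimpleModule.exists_isSimpleModule_not_le hP
  obtain ⟨w, hwW, hwP⟩ := SetLike.not_le_iff_exists.mp hWP
  refine ⟨W, hW, ⟨w, hwW⟩, fun h ↦ hwP ?_⟩
  show w * c = w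
  rw [hc]
  exact congrArg Subtype.val h

theorem Representation.mem_ker_ofModule {k G M : Type*} [CommSemiring k] [Group G]
    [AddCommMonoid M] [Module k[G] M] {g : G} :
    g ∈ (ofModule (k := k) M).ker ↔ ∀ m : M, MonoidAlgebra.single g (1 : k) • m = m := by
  rw [MonoidHom.mem_ker, LinearMap.ext_iff,
    (RestrictScalars.addEquiv k k[G] M).symm.surjective.forall]
  simp only [← asAlgebraHom_single_one, ofModule_asAlgebraHom_apply_apply, Module.End.one_apply,
    AddEquiv.apply_symm_apply, AddEquiv.symm_apply_eq]

instance RestrictScalars.moduleFinite {R S M : Type*} [CommSemiring R] [Semiring S] [Algebra R S]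
    [Module.Finite R S] [AddCommMonoid M] [Module S M] [Module.Finite S M] :
    Module.Finite R (RestrictScalars R S M) :=
  letI := RestrictScalars.moduleOrig R S M
  haveI : Module.Finite S (RestrictScalars R S M) := ‹Module.Finite S M›
  Module.Finite.trans S _

theorem FDRep.simple_of_isIrreducible {k G V : Type u} [Field k] [IsAlgClosed k] [Group G]
    [Finite G] [NeZero (Nat.card G : k)] [AddCommGroup V] [Module k V] [FiniteDimensional k V]
    (ρ : Representation k G V) [ρ.IsIrreducible] : Simple (FDRep.of ρ) := by
  rw [FDRep.simple_iff_end_is_rank_one, ← (FDRep.forget₂HomLinearEquiv _ _).finrank_eq,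
    (Rep.homLinearEquiv _ _).finrank_eq]
  exact Representation.IsIrreducible.finrank_intertwiningMap_self ρ

-- The `k`-module instances are passed by hand: `RestrictScalars.module` lives over the
-- `AddCommMonoid` instance of `RestrictScalars`, which matches the one induced by its
-- `AddCommGroup` instance only after unfolding, so instance synthesis cannot find it.
theorem FDRep.exists_simple_ker_eq_ofModule {k G : Type u} [Field k] [IsAlgClosed k] [Group G]
    [Finite G] [NeZero (Nat.card G : k)] (M : Type u) [AddCommGroup M] [Module k[G] M]
    [IsSimpleModule k[G] M] :
    ∃ V : FDRep k G, Simple V ∧ V.ρ.ker = (Representation.ofModule (k := k) M).ker :=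
  haveI := (Representation.isSimpleModule_iff_irreducible_ofModule (k := k) (G := G) M).mp ‹_›
  ⟨@FDRep.of k G _ _ _ _ (RestrictScalars.module k k[G] M)
      (RestrictScalars.moduleFinite (S := k[G]) (M := M)) (Representation.ofModule M),
    @FDRep.simple_of_isIrreducible k G _ _ _ _ _ _ _ (RestrictScalars.module k k[G] M)
      (RestrictScalars.moduleFinite (S := k[G]) (M := M)) (Representation.ofModule M) ‹_›, rfl⟩

theorem IsPGroup.exists_simple_fdRep_injective {k G : Type u} [Field k] [IsAlgClosed k]
    [Group G] [Finite G] [NeZero (Nat.card G : k)] {p : ℕ} [Fact p.Prime] (hG : IsPGroup p G)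
    [IsCyclic (Subgroup.center G)] : ∃ V : FDRep k G, Simple V ∧ Function.Injective V.ρ := by
  rcases subsingleton_or_nontrivial G with _ | _
  · obtain ⟨W, _⟩ := IsSemisimpleModule.exists_simple_submodule k[G] k[G]
    obtain ⟨V, hV, -⟩ := FDRep.exists_simple_ker_eq_ofModule (k := k) (G := G) W
    exact ⟨V, hV, Function.injective_of_subsingleton _⟩
  obtain ⟨z, hzc, hz1, hzN⟩ := hG.exists_mem_center_mem_of_normal_ne_bot
  obtain ⟨W, _, w, hw⟩ := MonoidAlgebra.exists_isSimpleModule_single_smul_ne (k := k) hzc hz1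
  obtain ⟨V, hV, hker⟩ := FDRep.exists_simple_ker_eq_ofModule (k := k) (G := G) W
  refine ⟨V, hV, (MonoidHom.ker_eq_bot_iff _).mp ?_⟩
  by_contra hne
  have hz : z ∈ V.ρ.ker := hzN _ inferInstance hne
  rw [hker, Representation.mem_ker_ofModule] at hz
  exact hw (hz w)

theorem stmt_14 (p : ℕ) (hp : p.Prime) (G : Type) [Group G] [Finite G]
    (hG : IsPGroup p G) (hc : IsCyclic (Subgroup.center G)) :
    ∃ V : FDRep ℂ G, Simple V ∧ Function.Injective V.ρ := by
  have : Fact p.Prime := ⟨hp⟩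
  have : NeZero (Nat.card G : ℂ) := ⟨Nat.cast_ne_zero.mpr Nat.card_pos.ne'⟩
  exact hG.exists_simple_fdRep_injective
end

section
/- Let G be a finite group acting faithfully on a field L by automorphisms, and suppose G acts on the rational function field L(x) in one variable by automorphisms satisfying σ(L) ⊆ L and σ(x) = a_σ·x + b_σ with a_σ, b_σ ∈ L and a_σ ≠ 0 for all σ ∈ G. Then the fixed field L(x)^G equals L^G(f) for some polynomial f ∈ L[x]; in fact any G-invariant polynomial f of minimal positive degree among G-invariant polynomials not lying in L^G satisfies L(x)^G = L^G(f). -/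
/-!
Since `G` acts faithfully on `L`, Dedekind's independence of characters gives `u ∈ L` whose
trace `∑ σ, σ(u x)` has nonzero `x`-coefficient: an invariant polynomial of degree one. So a
minimal `f` is linear, `f = a x + b`, and `φ : x ↦ f` is an automorphism of `L(x)` over `L`.
Each `σ ∈ G` fixes `f`, hence `σ ∘ φ = φ ∘ σ̃`, where `σ̃` acts on coefficients only. The fixed
field of the coefficientwise action is `L^G(x)`, because the reduced numerator and monic
denominator of a fixed rational function are themselves fixed; applying `φ` gives `L^G(f)`.
-/

open Polynomial hiding C X

namespace RatFunc

variable {K : Type*} [Field K]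

theorem ringHom_ext {R : Type*} [Semiring R] {σ τ : RatFunc K →+* R}
    (hC : ∀ c, σ (C c) = τ (C c)) (hX : σ X = τ X) : σ = τ := by
  refine IsLocalization.ringHom_ext (nonZeroDivisors K[X]) (Polynomial.ringHom_ext ?_ ?_)
  · simpa only [RingHom.comp_apply, algebraMap_C] using hC
  · simpa only [RingHom.comp_apply, algebraMap_X] using hX

theorem algebraMap_mem {S : Subfield (RatFunc K)} (hX : X ∈ S) {p : K[X]}
    (hp : ∀ i, C (p.coeff i) ∈ S) : algebraMap K[X] (RatFunc K) p ∈ S := by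
  rw [p.as_sum_support_C_mul_X_pow, map_sum]
  refine S.sum_mem fun i _ => ?_
  rw [map_mul, map_pow, algebraMap_C, algebraMap_X]
  exact mul_mem (hp i) (pow_mem hX i)

theorem nonZeroDivisors_le_comap_mapRingHom {K' : Type*} [Field K'] (E : K →+* K') :
    nonZeroDivisors K[X] ≤ (nonZeroDivisors K'[X]).comap (Polynomial.mapRingHom E) := fun _ hp =>
  mem_nonZeroDivisors_of_ne_zero <|
    (Polynomial.map_ne_zero_iff E.injective).mpr (nonZeroDivisors.ne_zero hp)

noncomputable def mapCoeffs {K' : Type*} [Field K'] (E : K →+* K') : RatFunc K →+* RatFunc K' :=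
  mapRingHom (Polynomial.mapRingHom E) (nonZeroDivisors_le_comap_mapRingHom E)

theorem mapCoeffs_algebraMap {K' : Type*} [Field K'] (E : K →+* K') (p : K[X]) :
    mapCoeffs E (algebraMap K[X] (RatFunc K) p) = algebraMap K'[X] (RatFunc K') (p.map E) := by
  have h := map_apply_div _ (nonZeroDivisors_le_comap_mapRingHom E) p 1
  simp only [map_one, div_one, Polynomial.coe_mapRingHom] at h
  exact h

theorem mapCoeffs_C {K' : Type*} [Field K'] (E : K →+* K') (c : K) :
    mapCoeffs E (C c) = C (E c) := by
  rw [← algebraMap_C, mapCoeffs_algebraMap, Polynomial.map_C, algebraMap_C]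

theorem mapCoeffs_X {K' : Type*} [Field K'] (E : K →+* K') : mapCoeffs E X = X := by
  rw [← algebraMap_X, mapCoeffs_algebraMap, Polynomial.map_X, algebraMap_X]

theorem mapCoeffs_eq_div (E : K →+* K) (w : RatFunc K) :
    mapCoeffs E w = algebraMap K[X] (RatFunc K) (w.num.map E)
      / algebraMap K[X] (RatFunc K) (w.denom.map E) := by
  conv_lhs => rw [← num_div_denom w]
  rw [map_div₀, mapCoeffs_algebraMap, mapCoeffs_algebraMap]

theorem denom_map_eq_of_mapCoeffs_eq {E : K →+* K} {w : RatFunc K} (hw : mapCoeffs E w = w) :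
    w.denom.map E = w.denom := by
  have hdvd : w.denom ∣ w.denom.map E :=
    (denom_dvd ((Polynomial.map_ne_zero_iff E.injective).mpr (denom_ne_zero w))).mpr
      ⟨_, hw.symm.trans (mapCoeffs_eq_div E w)⟩
  exact eq_of_monic_of_dvd_of_natDegree_le (monic_denom w) ((monic_denom w).map E) hdvd
    (natDegree_map_eq_of_injective E.injective _).le

theorem num_map_eq_of_mapCoeffs_eq {E : K →+* K} {w : RatFunc K} (hw : mapCoeffs E w = w) :
    w.num.map E = w.num := by
  have hden := denom_map_eq_of_mapCoeffs_eq hw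
  have h := (num_mul_eq_mul_denom_iff (denom_ne_zero w)).mpr
    (hw.symm.trans ((mapCoeffs_eq_div E w).trans (by rw [hden])))
  exact (mul_right_cancel₀ (denom_ne_zero w) h).symm

theorem mem_of_forall_mapCoeffs_eq {ι : Type*} {E : ι → K →+* K} {S : Subfield (RatFunc K)}
    (hX : X ∈ S) (hC : ∀ c, (∀ i, E i c = c) → C c ∈ S) {w : RatFunc K}
    (hw : ∀ i, mapCoeffs (E i) w = w) : w ∈ S := by
  have hcoeff : ∀ p : K[X], (∀ i, p.map (E i) = p) → algebraMap K[X] (RatFunc K) p ∈ S :=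
    fun p hp => algebraMap_mem hX fun n => hC _ fun i => by
      rw [← coeff_map, hp i]
  rw [← num_div_denom w]
  exact div_mem (hcoeff _ fun i => num_map_eq_of_mapCoeffs_eq (hw i))
    (hcoeff _ fun i => denom_map_eq_of_mapCoeffs_eq (hw i))

theorem exists_ringEquiv_apply_X_eq {f : K[X]} (hf : f.natDegree = 1) :
    ∃ φ : RatFunc K ≃+* RatFunc K,
      (∀ c, φ (C c) = C c) ∧ φ X = algebraMap K[X] (RatFunc K) f := by
  have ha : f.coeff 1 ≠ 0 := by
    rw [← hf]
    exact leadingCoeff_ne_zero.mpr (ne_zero_of_natDegree_gt (n := 0) (by omega))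
  let := invertibleOfNonzero ha
  let φ := IsFractionRing.fieldEquivOfAlgEquiv K (RatFunc K) (RatFunc K)
    (algEquivCMulXAddC (f.coeff 1) (f.coeff 0))
  refine ⟨φ.toRingEquiv, fun c => ?_, ?_⟩
  · change φ (C c) = C c
    rw [← algebraMap_C, IsFractionRing.fieldEquivOfAlgEquiv_algebraMap]
    simp
  · change φ X = _
    rw [← algebraMap_X, IsFractionRing.fieldEquivOfAlgEquiv_algebraMap]
    conv_rhs => rw [eq_X_add_C_of_natDegree_le_one hf.le]
    simp

noncomputable def restrictC (σ : RatFunc K →+* RatFunc K) (h : ∀ c, ∃ c', σ (C c) = C c') :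
    K →+* K where
  toFun c := (h c).choose
  map_one' := C_injective <| by rw [← (h 1).choose_spec, map_one, map_one]
  map_mul' x y := C_injective <| by
    rw [← (h _).choose_spec, map_mul, map_mul, map_mul]
    exact congrArg₂ (· * ·) (h x).choose_spec (h y).choose_spec
  map_zero' := C_injective <| by rw [← (h 0).choose_spec, map_zero, map_zero]
  map_add' x y := C_injective <| by
    rw [← (h _).choose_spec, map_add, map_add, map_add]
    exact congrArg₂ (· + ·) (h x).choose_spec (h y).choose_spec

theorem apply_C_eq_C_restrictC (σ : RatFunc K →+* RatFunc K) (h : ∀ c, ∃ c', σ (C c) = C c')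
    (c : K) : σ (C c) = C (restrictC σ h c) :=
  (h c).choose_spec

end RatFunc

open RatFunc

theorem exists_sum_mul_apply_ne_zero {K L ι : Type*} [Field K] [Field L] [Fintype ι]
    {E : ι → K →+* L} (hE : Function.Injective E) {a : ι → L} (ha : a ≠ 0) :
    ∃ u, ∑ i, a i * E i u ≠ 0 := by
  by_contra! h
  have hind : LinearIndependent L fun i => ⇑(E i) :=
    (linearIndependent_monoidHom K L).comp (fun i => (E i).toMonoidHom)
      fun _ _ hij => hE (RingHom.ext fun c => (DFunLike.congr_fun hij c :))
  exact ha (funext (Fintype.linearIndependent_iff.mp hind a (funext fun u => by simpa using h u)))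

theorem map_sum_orbit {G R : Type*} [Group G] [Fintype G] [Semiring R] (ρ : G →* R ≃+* R)
    (h : G) (z : R) : ρ h (∑ g, ρ g z) = ∑ g, ρ g z := by
  rw [map_sum]
  exact Fintype.sum_equiv (Equiv.mulLeft h) _ _ fun g => by simp

section AffineAction

variable {K G : Type*} [Field K] [Group G] (ρ : G →* RatFunc K ≃+* RatFunc K)
  {E : G → K →+* K}

theorem injective_of_faithful (hρC : ∀ g c, ρ g (C c) = C (E g c))
    (hfaith : ∀ g, (∀ c, ρ g (C c) = C c) → g = 1) :
    Function.Injective E := by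
  intro g h hgh
  have hfix : ∀ c, ρ (h⁻¹ * g) (C c) = C c := fun c => by
    rw [map_mul, RingAut.mul_apply, hρC, hgh, ← hρC, ← RingAut.mul_apply, ← map_mul,
      inv_mul_cancel, map_one, RingAut.one_apply]
  exact (inv_mul_eq_one.mp (hfaith _ hfix)).symm

theorem exists_invariant_natDegree_eq_one [Fintype G] (hρC : ∀ g c, ρ g (C c) = C (E g c))
    (hE : Function.Injective E)
    (haff : ∀ g, ∃ a b, a ≠ 0 ∧ ρ g X = C a * X + C b) :
    ∃ p : K[X], p.natDegree = 1 ∧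
      ∀ g, ρ g (algebraMap K[X] (RatFunc K) p) = algebraMap K[X] (RatFunc K) p := by
  choose a b ha hab using haff
  obtain ⟨u, hu⟩ := exists_sum_mul_apply_ne_zero hE (a := a) fun h => ha 1 (congrFun h 1)
  have htrace : algebraMap K[X] (RatFunc K)
      (Polynomial.C (∑ g, a g * E g u) * Polynomial.X + Polynomial.C (∑ g, b g * E g u))
        = ∑ g, ρ g (C u * X) := by
    simp only [map_add, map_mul, algebraMap_C, algebraMap_X, hρC, hab, map_sum,
      Finset.sum_mul, ← Finset.sum_add_distrib]
    exact Finset.sum_congr rfl fun g _ => by ring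
  exact ⟨_, natDegree_linear hu, fun g => by rw [htrace, map_sum_orbit]⟩

theorem apply_comp_eq_comp_mapCoeffs (hρC : ∀ g c, ρ g (C c) = C (E g c))
    {φ : RatFunc K →+* RatFunc K} (hφC : ∀ c, φ (C c) = C c) (hφX : ∀ g, ρ g (φ X) = φ X)
    (g : G) :
    (ρ g : RatFunc K →+* RatFunc K).comp φ = φ.comp (mapCoeffs (E g)) :=
  RatFunc.ringHom_ext (fun c => by simp [hφC, hρC, mapCoeffs_C])
    (by simpa [mapCoeffs_X] using hφX g)

end AffineAction

theorem stmt_15 (L : Type*) [Field L] (G : Type*) [Group G] [Finite G]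
    (ρ : G →* (RatFunc L ≃+* RatFunc L))
    -- each σ ∈ G maps L into L
    (hL : ∀ (g : G) (c : L), ∃ c' : L, ρ g (RatFunc.C c) = RatFunc.C c')
    -- the action of G on L is faithful
    (hfaith : ∀ g : G, (∀ c : L, ρ g (RatFunc.C c) = RatFunc.C c) → g = 1)
    -- σ(x) = a_σ x + b_σ with a_σ ≠ 0
    (haff : ∀ g : G, ∃ a b : L, a ≠ 0 ∧
      ρ g RatFunc.X = RatFunc.C a * RatFunc.X + RatFunc.C b)
    -- f is a G-invariant polynomial of minimal degree among the
    -- G-invariant polynomials not lying in L^G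
    (f : Polynomial L)
    (hfinv : ∀ g : G, ρ g (algebraMap (Polynomial L) (RatFunc L) f)
      = algebraMap (Polynomial L) (RatFunc L) f)
    (hfdeg : 0 < f.natDegree)
    (hfmin : ∀ h : Polynomial L,
      (∀ g : G, ρ g (algebraMap (Polynomial L) (RatFunc L) h)
        = algebraMap (Polynomial L) (RatFunc L) h) →
      0 < h.natDegree → f.natDegree ≤ h.natDegree) :
    -- then L(x)^G = L^G(f)
    ∀ z : RatFunc L, (∀ g : G, ρ g z = z) ↔
      z ∈ Subfield.closure
        ({w | ∃ c : L, w = RatFunc.C c ∧ ∀ g : G, ρ g (RatFunc.C c) = RatFunc.C c}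
          ∪ {algebraMap (Polynomial L) (RatFunc L) f}) := by
  have := Fintype.ofFinite G
  let E g := restrictC (ρ g).toRingHom (hL g)
  have hρC : ∀ g c, ρ g (C c) = C (E g c) := fun g =>
    apply_C_eq_C_restrictC (ρ g).toRingHom (hL g)
  obtain ⟨p, hp, hpinv⟩ := exists_invariant_natDegree_eq_one ρ hρC
    (injective_of_faithful ρ hρC hfaith) haff
  have hf : f.natDegree = 1 := le_antisymm (hp ▸ hfmin p hpinv (by omega)) hfdeg
  obtain ⟨φ, hφC, hφX⟩ := exists_ringEquiv_apply_X_eq hf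
  have hconj := apply_comp_eq_comp_mapCoeffs ρ hρC (φ := φ) hφC (hφX ▸ hfinv)
  intro z
  constructor
  · intro hz
    have hfix : ∀ g, mapCoeffs (E g) (φ.symm z) = φ.symm z := fun g => φ.injective <| by
      simpa [hz g] using (RingHom.congr_fun (hconj g) (φ.symm z)).symm
    rw [← φ.apply_symm_apply z]
    refine Subfield.mem_comap.mp (mem_of_forall_mapCoeffs_eq (S := Subfield.comap φ.toRingHom _)
      ?_ (fun c hc => ?_) hfix)
    · rw [Subfield.mem_comap, RingEquiv.toRingHom_eq_coe, RingEquiv.coe_toRingHom, hφX]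
      exact Subfield.subset_closure (Or.inr rfl)
    · rw [Subfield.mem_comap, RingEquiv.toRingHom_eq_coe, RingEquiv.coe_toRingHom, hφC]
      exact Subfield.subset_closure (Or.inl ⟨c, rfl, fun g => by rw [hρC, hc]⟩)
  · intro hz g
    refine (Subfield.closure_le (t := (ρ g : RatFunc L →+* RatFunc L).eqLocusField
      (RingHom.id _))).mpr ?_ hz
    rintro w (⟨c, rfl, hc⟩ | rfl)
    exacts [hc g, hfinv g]
end

section
/- Let K be any field and G a finite group acting on K(x₁,…,xₙ) by monomial K-automorphisms (each σ sends xⱼ to a nonzero constant times a power product of the xᵢ, with exponent matrix in GLₙ(ℤ)). Let H₀ be the kernel of the induced homomorphism G → GLₙ(ℤ) recording the exponent matrices. Then H₀ is abelian, and the fixed field K(x₁,…,xₙ)^{H₀} equals K(M₁,…,Mₙ) for some power products M₁,…,Mₙ in x₁,…,xₙ which are algebraically independent over K. -/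
/-- The rational function field in `n` variables over `K`. -/
noncomputable abbrev RatFuncN (K : Type*) [Field K] (n : ℕ) : Type _ :=
  FractionRing (MvPolynomial (Fin n) K)

/-!
Every element of `H₀` scales each variable, so any two of them agree on the `xᵢ` and commute;
faithfulness makes `H₀` abelian.

Each Laurent monomial `x ^ l` is an eigenvector of every `σ ∈ H₀`, with an `|H₀|`-th root of unity
as eigenvalue. Hence the exponents of the invariant monomials form a lattice `L ⊆ ℤⁿ` containing
`|H₀| • ℤⁿ`, so `L` has a basis `λ₁, …, λₙ`; the `Mⱼ = x ^ λⱼ` are algebraically independent because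
distinct Laurent monomials are linearly independent. An invariant polynomial has only invariant
monomials, so it lies in `K(M₁, …, Mₙ)`. Finally an invariant fraction `p / q` equals
`p N' / N`, where the norm `N = ∏_{σ ∈ H₀} σ q = q N'` is an invariant polynomial because
diagonal automorphisms preserve `K[x₁, …, xₙ]`.
-/

open MvPolynomial

theorem LinearIndependent.apply_eq_of_apply_sum_eq {K V ι : Type*} [DivisionRing K] [AddCommGroup V]
    [Module K V] {v : ι → V} (hv : LinearIndependent K v) (f : V →ₗ[K] V)
    (hf : ∀ i, ∃ c : K, f (v i) = c • v i) {s : Finset ι} {a : ι → K}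
    (h : f (∑ i ∈ s, a i • v i) = ∑ i ∈ s, a i • v i) {i : ι} (hi : i ∈ s) (hai : a i ≠ 0) :
    f (v i) = v i := by
  choose c hc using hf
  have hsum : ∑ j ∈ s, (a j * c j - a j) • v j = 0 := by
    simpa only [sub_smul, mul_smul, Finset.sum_sub_distrib, map_sum, map_smul, hc, sub_eq_zero]
      using h
  have hci : a i * c i - a i = 0 := linearIndependent_iff'.1 hv s _ hsum i hi
  rw [hc, show c i = 1 by
    rw [sub_eq_zero, ← mul_one (a i), mul_assoc, one_mul] at hci
    exact mul_left_cancel₀ hai hci, one_smul]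

namespace RatFuncN

variable (K : Type*) [Field K] {n : ℕ}

noncomputable def laurentMonomial (l : Fin n → ℤ) : RatFuncN K n :=
  ∏ i, algebraMap (MvPolynomial (Fin n) K) (RatFuncN K n) (X i) ^ l i

variable {K}

theorem algebraMap_X_ne_zero (i : Fin n) :
    algebraMap (MvPolynomial (Fin n) K) (RatFuncN K n) (X i) ≠ 0 :=
  (map_ne_zero_iff _ (IsFractionRing.injective _ _)).2 (X_ne_zero i)

theorem laurentMonomial_ne_zero (l : Fin n → ℤ) : laurentMonomial K l ≠ 0 :=
  Finset.prod_ne_zero_iff.2 fun i _ => zpow_ne_zero _ (algebraMap_X_ne_zero i)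

@[simp]
theorem laurentMonomial_zero : laurentMonomial K (0 : Fin n → ℤ) = 1 := by
  simp [laurentMonomial]

theorem laurentMonomial_add (l l' : Fin n → ℤ) :
    laurentMonomial K (l + l') = laurentMonomial K l * laurentMonomial K l' := by
  rw [laurentMonomial, laurentMonomial, laurentMonomial, ← Finset.prod_mul_distrib]
  exact Finset.prod_congr rfl fun i _ => zpow_add₀ (algebraMap_X_ne_zero i) _ _

theorem laurentMonomial_zsmul (k : ℤ) (l : Fin n → ℤ) :
    laurentMonomial K (k • l) = laurentMonomial K l ^ k := by
  simp only [laurentMonomial, Pi.smul_apply, smul_eq_mul, mul_comm k, zpow_mul,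
    Finset.prod_zpow]

theorem laurentMonomial_sum {ι : Type*} (s : Finset ι) (k : ι → ℤ) (v : ι → Fin n → ℤ) :
    laurentMonomial K (∑ j ∈ s, k j • v j) = ∏ j ∈ s, laurentMonomial K (v j) ^ k j := by
  classical
  induction s using Finset.induction with
  | empty => simp
  | insert j s hj ih =>
    rw [Finset.sum_insert hj, Finset.prod_insert hj, laurentMonomial_add, laurentMonomial_zsmul,
      ih]

theorem algebraMap_monomial (d : Fin n →₀ ℕ) (a : K) :
    algebraMap (MvPolynomial (Fin n) K) (RatFuncN K n) (monomial d a) =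
      a • laurentMonomial K (fun i => (d i : ℤ)) := by
  simp only [laurentMonomial, zpow_natCast, monomial_eq, Algebra.smul_def, map_mul,
    algebraMap_eq, IsScalarTower.algebraMap_apply K (MvPolynomial (Fin n) K) (RatFuncN K n),
    Finsupp.prod_fintype _ _ (fun i => pow_zero _), map_prod, map_pow]

theorem algebraMap_eq_sum_laurentMonomial (P : MvPolynomial (Fin n) K) :
    algebraMap (MvPolynomial (Fin n) K) (RatFuncN K n) P =
      ∑ d ∈ P.support, coeff d P • laurentMonomial K (fun i => (d i : ℤ)) := by
  conv_lhs => rw [P.as_sum]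
  simp only [map_sum, algebraMap_monomial]

theorem linearIndependent_laurentMonomial_natCast :
    LinearIndependent K fun d : Fin n →₀ ℕ => laurentMonomial K (fun i => (d i : ℤ)) := by
  have h := (basisMonomials (Fin n) K).linearIndependent.map'
    (IsScalarTower.toAlgHom K (MvPolynomial (Fin n) K) (RatFuncN K n)).toLinearMap
    (LinearMap.ker_eq_bot.2 (IsFractionRing.injective _ _))
  simpa [Function.comp_def, algebraMap_monomial] using h

theorem linearIndependent_laurentMonomial :
    LinearIndependent K (laurentMonomial K : (Fin n → ℤ) → RatFuncN K n) := by
  classical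
  rw [linearIndependent_iff_finset_linearIndependent]
  intro s
  -- multiplying by `x ^ b` turns the Laurent monomials indexed by `s` into distinct monomials
  set b : Fin n → ℤ := ∑ l ∈ s, fun i => |l i|
  have hb : ∀ l ∈ s, ∀ i, 0 ≤ l i + b i := fun l hl i => by
    have : |l i| ≤ b i := by
      simpa [b] using Finset.single_le_sum (f := fun l : Fin n → ℤ => |l i|)
        (fun _ _ => abs_nonneg _) hl
    linarith [neg_abs_le (l i)]
  let shift : s → (Fin n →₀ ℕ) := fun l =>
    Finsupp.equivFunOnFinite.symm fun i => (l.1 i + b i).toNat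
  have hshift : ∀ l : s, (fun i => (shift l i : ℤ)) = l.1 + b := fun l => funext fun i =>
    Int.toNat_of_nonneg (hb l.1 l.2 i)
  have hinj : Function.Injective shift := fun l l' h => Subtype.ext <| by
    have := congrArg (fun d : Fin n →₀ ℕ => fun i => (d i : ℤ)) h
    simp only [hshift] at this
    exact add_right_cancel this
  have hcomp : LinearMap.mulLeft K (laurentMonomial K b) ∘ (laurentMonomial K ∘ Subtype.val) =
      (fun d : Fin n →₀ ℕ => laurentMonomial K (fun i => (d i : ℤ))) ∘ shift := by
    funext l
    simp only [Function.comp_apply, LinearMap.mulLeft_apply, hshift, laurentMonomial_add, mul_comm]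
  exact .of_comp _ (hcomp ▸ linearIndependent_laurentMonomial_natCast.comp shift hinj)

theorem algebraicIndependent_laurentMonomial {ι : Type*} [Fintype ι] {v : ι → Fin n → ℤ}
    (hv : LinearIndependent ℤ v) : AlgebraicIndependent K fun j => laurentMonomial K (v j) := by
  rw [algebraicIndependent_iff]
  intro p hp
  set e : (ι →₀ ℕ) → (Fin n → ℤ) := fun d => ∑ j, (d j : ℤ) • v j
  have he : Function.Injective e := fun d d' h => Finsupp.ext fun j => by
    have := Fintype.linearIndependent_iff.1 hv (fun j => (d j : ℤ) - d' j)
      (by simp only [sub_smul, Finset.sum_sub_distrib, sub_eq_zero]; exact h) j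
    omega
  have hmonomial : ∀ d, laurentMonomial K (e d) = ∏ j, laurentMonomial K (v j) ^ d j := by
    simp only [e, laurentMonomial_sum, zpow_natCast, implies_true]
  have haeval : aeval (fun j => laurentMonomial K (v j)) p =
      ∑ d ∈ p.support, coeff d p • laurentMonomial K (e d) := by
    conv_lhs => rw [p.as_sum]
    simp only [map_sum, aeval_monomial, Finsupp.prod_fintype _ _ (fun j => pow_zero _),
      hmonomial, Algebra.smul_def]
  have hzero := linearIndependent_iff'.1 (linearIndependent_laurentMonomial.comp e he)
    p.support (fun d => coeff d p) (by simpa [haeval] using hp)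
  ext d
  by_cases hd : d ∈ p.support
  · exact hzero d hd
  · exact notMem_support_iff.1 hd

variable (K n) in
def diagonalSubgroup : Subgroup (RatFuncN K n ≃ₐ[K] RatFuncN K n) where
  carrier := {σ | ∀ i, ∃ c : K, c ≠ 0 ∧
    σ (algebraMap (MvPolynomial (Fin n) K) (RatFuncN K n) (X i)) =
      algebraMap K (RatFuncN K n) c * algebraMap (MvPolynomial (Fin n) K) (RatFuncN K n) (X i)}
  one_mem' i := ⟨1, one_ne_zero, by simp⟩
  mul_mem' {σ τ} hσ hτ i := by
    obtain ⟨c, hc, hσi⟩ := hσ i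
    obtain ⟨d, hd, hτi⟩ := hτ i
    refine ⟨c * d, mul_ne_zero hc hd, ?_⟩
    rw [AlgEquiv.mul_apply, hτi, map_mul, AlgEquiv.commutes, hσi, map_mul]
    ring
  inv_mem' {σ} hσ i := by
    obtain ⟨c, hc, hσi⟩ := hσ i
    refine ⟨c⁻¹, inv_ne_zero hc, ?_⟩
    rw [map_inv₀, eq_inv_mul_iff_mul_eq₀ ((map_ne_zero _).2 hc)]
    have h := congrArg σ.symm hσi
    rw [AlgEquiv.symm_apply_apply, map_mul, AlgEquiv.commutes] at h
    rw [AlgEquiv.aut_inv, ← h]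

theorem algEquiv_ext {σ τ : RatFuncN K n ≃ₐ[K] RatFuncN K n}
    (h : ∀ i, σ (algebraMap (MvPolynomial (Fin n) K) (RatFuncN K n) (X i)) =
      τ (algebraMap (MvPolynomial (Fin n) K) (RatFuncN K n) (X i))) : σ = τ :=
  AlgEquiv.coe_toAlgHom_injective <| IsLocalization.algHom_ext (nonZeroDivisors _) <|
    MvPolynomial.algHom_ext h

theorem mul_comm_of_mem_diagonalSubgroup {σ τ : RatFuncN K n ≃ₐ[K] RatFuncN K n}
    (hσ : σ ∈ diagonalSubgroup K n) (hτ : τ ∈ diagonalSubgroup K n) : σ * τ = τ * σ := by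
  refine algEquiv_ext fun i => ?_
  obtain ⟨c, -, hσi⟩ := hσ i
  obtain ⟨d, -, hτi⟩ := hτ i
  simp only [AlgEquiv.mul_apply, hσi, hτi, map_mul, AlgEquiv.commutes]
  ring

theorem exists_apply_laurentMonomial_eq_smul {σ : RatFuncN K n ≃ₐ[K] RatFuncN K n}
    (hσ : σ ∈ diagonalSubgroup K n) (l : Fin n → ℤ) :
    ∃ c : K, σ (laurentMonomial K l) = c • laurentMonomial K l := by
  choose c _ hc using hσ
  refine ⟨∏ i, c i ^ l i, ?_⟩
  simp only [laurentMonomial, map_prod, map_zpow₀, hc, mul_zpow, Finset.prod_mul_distrib,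
    Algebra.smul_def]

theorem apply_algebraMap_mem_range {σ : RatFuncN K n ≃ₐ[K] RatFuncN K n}
    (hσ : σ ∈ diagonalSubgroup K n) (P : MvPolynomial (Fin n) K) :
    σ (algebraMap _ _ P) ∈ (algebraMap (MvPolynomial (Fin n) K) (RatFuncN K n)).range := by
  induction P using MvPolynomial.induction_on with
  | C a => exact ⟨C a, by rw [← algebraMap_eq, ← IsScalarTower.algebraMap_apply,
      AlgEquiv.commutes, IsScalarTower.algebraMap_apply K (MvPolynomial (Fin n) K)]⟩
  | add P Q hP hQ => simpa only [map_add] using add_mem hP hQ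
  | mul_X P i hP =>
    obtain ⟨c, -, hσi⟩ := hσ i
    rw [map_mul, map_mul, hσi]
    refine mul_mem hP (mul_mem ⟨C c, ?_⟩ ⟨X i, rfl⟩)
    rw [← algebraMap_eq, ← IsScalarTower.algebraMap_apply]

section InvariantLattice

variable (H : Subgroup (RatFuncN K n ≃ₐ[K] RatFuncN K n))

def invariantLattice : Submodule ℤ (Fin n → ℤ) where
  carrier := {l | ∀ σ ∈ H, σ (laurentMonomial K l) = laurentMonomial K l}
  add_mem' {l l'} hl hl' σ hσ := by rw [laurentMonomial_add, map_mul, hl σ hσ, hl' σ hσ]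
  zero_mem' σ _ := by rw [laurentMonomial_zero, map_one]
  smul_mem' k l hl σ hσ := by rw [laurentMonomial_zsmul, map_zpow₀, hl σ hσ]

variable {H}

theorem card_smul_mem_invariantLattice [Finite H] (hH : H ≤ diagonalSubgroup K n)
    (l : Fin n → ℤ) : (Nat.card H : ℤ) • l ∈ invariantLattice H := by
  intro σ hσ
  obtain ⟨c, hc⟩ := exists_apply_laurentMonomial_eq_smul (hH hσ) l
  have hpow : ∀ k : ℕ, (σ ^ k) (laurentMonomial K l) = c ^ k • laurentMonomial K l := by
    intro k
    induction k with
    | zero => simp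
    | succ k ih => rw [pow_succ, AlgEquiv.mul_apply, hc, map_smul, ih, smul_smul, pow_succ']
  have hσN : σ ^ Nat.card H = 1 := congrArg Subtype.val (pow_card_eq_one' (x := ⟨σ, hσ⟩))
  have hcN : c ^ Nat.card H = 1 := by
    have h := hpow (Nat.card H)
    rw [hσN, AlgEquiv.one_apply] at h
    exact smul_left_injective K (laurentMonomial_ne_zero l) (h.symm.trans (one_smul K _).symm)
  rw [laurentMonomial_zsmul, zpow_natCast, map_pow, hc, smul_pow, hcN, one_smul]

theorem finrank_invariantLattice [Finite H] (hH : H ≤ diagonalSubgroup K n) :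
    Module.finrank ℤ (invariantLattice H) = n := by
  refine le_antisymm ?_ ?_
  · have h := Submodule.finrank_le (invariantLattice H)
    rwa [Module.finrank_fin_fun] at h
  let f : (Fin n → ℤ) →ₗ[ℤ] invariantLattice H := LinearMap.codRestrict (invariantLattice H)
    ((Nat.card H : ℤ) • LinearMap.id) fun l => by
      simpa only [LinearMap.smul_apply, LinearMap.id_apply] using
        card_smul_mem_invariantLattice hH l
  have hf : Function.Injective f := fun u v h => by
    have h' := congrArg Subtype.val h
    simp only [f, LinearMap.codRestrict_apply, LinearMap.smul_apply, LinearMap.id_apply] at h'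
    exact smul_right_injective _ (Nat.cast_ne_zero.2 Nat.card_pos.ne') h'
  simpa using LinearMap.finrank_le_finrank_of_injective hf

theorem laurentMonomial_mem_adjoin_basis {L : Submodule ℤ (Fin n → ℤ)} {ι : Type*} [Fintype ι]
    (b : Module.Basis ι ℤ L) {l : Fin n → ℤ} (hl : l ∈ L) :
    laurentMonomial K l ∈
      IntermediateField.adjoin K (Set.range fun j => laurentMonomial K (b j : Fin n → ℤ)) := by
  have hsum : l = ∑ j, b.repr ⟨l, hl⟩ j • (b j : Fin n → ℤ) := by
    have h := congrArg Subtype.val (b.sum_repr ⟨l, hl⟩)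
    rw [Submodule.coe_sum] at h
    exact h.symm
  rw [hsum, laurentMonomial_sum]
  exact prod_mem fun j _ =>
    zpow_mem (IntermediateField.subset_adjoin K _ (Set.mem_range_self j)) _

theorem algebraMap_mem_adjoin_of_forall_apply_eq (hH : H ≤ diagonalSubgroup K n) {ι : Type*}
    [Fintype ι] (b : Module.Basis ι ℤ (invariantLattice H)) {P : MvPolynomial (Fin n) K}
    (hP : ∀ σ ∈ H, σ (algebraMap _ _ P) = algebraMap _ _ P) :
    algebraMap (MvPolynomial (Fin n) K) (RatFuncN K n) P ∈
      IntermediateField.adjoin K (Set.range fun j => laurentMonomial K (b j : Fin n → ℤ)) := by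
  rw [algebraMap_eq_sum_laurentMonomial] at hP ⊢
  refine sum_mem fun d hd => IntermediateField.smul_mem _ ?_
  refine laurentMonomial_mem_adjoin_basis b fun σ hσ => ?_
  -- distinct monomials are eigenvectors of `σ`, so each monomial of `P` is fixed
  exact linearIndependent_laurentMonomial_natCast.apply_eq_of_apply_sum_eq σ.toLinearMap
    (fun d => exists_apply_laurentMonomial_eq_smul (hH hσ) _) (hP σ hσ) hd (mem_support_iff.1 hd)

theorem mem_adjoin_of_mem_fixedField [Finite H] (hH : H ≤ diagonalSubgroup K n) {ι : Type*}
    [Fintype ι] (b : Module.Basis ι ℤ (invariantLattice H)) {z : RatFuncN K n}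
    (hz : z ∈ IntermediateField.fixedField H) :
    z ∈ IntermediateField.adjoin K (Set.range fun j => laurentMonomial K (b j : Fin n → ℤ)) := by
  classical
  have := Fintype.ofFinite H
  set A := (algebraMap (MvPolynomial (Fin n) K) (RatFuncN K n)).range
  have hfixed : ∀ y ∈ A, (∀ σ ∈ H, σ y = y) →
      y ∈ IntermediateField.adjoin K (Set.range fun j => laurentMonomial K (b j : Fin n → ℤ)) := by
    rintro _ ⟨P, rfl⟩ hP
    exact algebraMap_mem_adjoin_of_forall_apply_eq hH b hP
  rw [IntermediateField.mem_fixedField_iff] at hz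
  obtain ⟨p, q, hq, hpq⟩ := IsFractionRing.div_surjective (MvPolynomial (Fin n) K) z
  have hq0 : algebraMap (MvPolynomial (Fin n) K) (RatFuncN K n) q ≠ 0 :=
    IsFractionRing.to_map_ne_zero_of_mem_nonZeroDivisors hq
  -- the norm `N = q · N'` of the denominator is an `H`-invariant polynomial
  set N := ∏ σ : H, (σ : RatFuncN K n ≃ₐ[K] RatFuncN K n) (algebraMap _ _ q) with hNdef
  set N' := ∏ σ ∈ Finset.univ.erase (1 : H),
    (σ : RatFuncN K n ≃ₐ[K] RatFuncN K n) (algebraMap _ _ q) with hN'def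
  have hN : N = algebraMap _ _ q * N' := by
    rw [hNdef, hN'def, ← Finset.mul_prod_erase Finset.univ _ (Finset.mem_univ (1 : H))]
    simp
  have hN0 : N ≠ 0 := Finset.prod_ne_zero_iff.2 fun σ _ => (map_ne_zero _).2 hq0
  have hNfix : ∀ τ ∈ H, τ N = N := fun τ hτ => by
    rw [map_prod]
    exact Fintype.prod_equiv (Equiv.mulLeft ⟨τ, hτ⟩) _ _ fun σ => rfl
  have hN'A : N' ∈ A := prod_mem fun σ _ => apply_algebraMap_mem_range (hH σ.2) q
  have hzN : z * N = algebraMap _ _ p * N' := by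
    rw [hN, ← hpq]
    field_simp
  rw [show z = z * N / N by field_simp]
  refine div_mem (hfixed _ (hzN ▸ mul_mem ⟨p, rfl⟩ hN'A) fun τ hτ => ?_)
    (hfixed _ (hN ▸ mul_mem ⟨q, rfl⟩ hN'A) hNfix)
  rw [map_mul, hz τ hτ, hNfix τ hτ]

theorem exists_fixedField_eq_adjoin_laurentMonomial [Finite H] (hH : H ≤ diagonalSubgroup K n) :
    ∃ lam : Fin n → Fin n → ℤ, AlgebraicIndependent K (fun j => laurentMonomial K (lam j)) ∧
      IntermediateField.fixedField H =
        IntermediateField.adjoin K (Set.range fun j => laurentMonomial K (lam j)) := by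
  obtain ⟨b⟩ : Nonempty (Module.Basis (Fin n) ℤ (invariantLattice H)) :=
    ⟨Module.finBasisOfFinrankEq ℤ _ (finrank_invariantLattice hH)⟩
  have hb : LinearIndependent ℤ fun j => (b j : Fin n → ℤ) :=
    b.linearIndependent.map' (invariantLattice H).subtype (Submodule.ker_subtype _)
  refine ⟨fun j => b j, algebraicIndependent_laurentMonomial hb,
    le_antisymm (fun z hz => mem_adjoin_of_mem_fixedField hH b hz) ?_⟩
  rw [IntermediateField.adjoin_le_iff]
  rintro _ ⟨j, rfl⟩
  exact (IntermediateField.mem_fixedField_iff _ _).2 (b j).2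

end InvariantLattice

end RatFuncN

theorem stmt_19_general (K : Type*) [Field K] (n : ℕ)
    (G : Type*) [Group G] [Finite G]
    (x : Fin n → RatFuncN K n)
    (hx : ∀ i, x i = algebraMap (MvPolynomial (Fin n) K) (RatFuncN K n) (MvPolynomial.X i))
    -- a faithful action of G on K(x₁,…,xₙ) by monomial K-automorphisms
    (ρ : G →* (RatFuncN K n ≃ₐ[K] RatFuncN K n)) (hρ : Function.Injective ρ)
    -- H₀ is the kernel of the exponent-matrix homomorphism G → GLₙ(ℤ):
    -- it consists of the elements acting by scaling each variable
    (H₀ : Set G)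
    (hH₀ : H₀ = {g | ∀ j, ∃ c : K, c ≠ 0 ∧
      ρ g (x j) = algebraMap K (RatFuncN K n) c * x j}) :
    -- H₀ is abelian, and its fixed field is K(M₁,…,Mₙ) for algebraically
    -- independent power products M₁,…,Mₙ in x₁,…,xₙ
    (∀ g ∈ H₀, ∀ h ∈ H₀, g * h = h * g) ∧
    ∃ M : Fin n → RatFuncN K n,
      (∀ j, ∃ lam : Fin n → ℤ, M j = ∏ i, x i ^ (lam i)) ∧
      AlgebraicIndependent K M ∧
      ∀ z : RatFuncN K n,
        (∀ g ∈ H₀, ρ g z = z) ↔ z ∈ IntermediateField.adjoin K (Set.range M) := by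
  obtain rfl : x = fun i => algebraMap _ _ (X i) := funext hx
  set D := RatFuncN.diagonalSubgroup K n
  have hH₀ρ : ∀ g, g ∈ H₀ ↔ ρ g ∈ D := fun g => hH₀ ▸ Iff.rfl
  have : Finite ρ.range := Finite.of_surjective _ ρ.rangeRestrict_surjective
  have : Finite ↥(D ⊓ ρ.range) := Finite.of_injective _ (Subgroup.inclusion_injective inf_le_right)
  obtain ⟨lam, hind, hfix⟩ :=
    RatFuncN.exists_fixedField_eq_adjoin_laurentMonomial (H := D ⊓ ρ.range) inf_le_left
  refine ⟨fun g hg h hh => hρ ?_, fun j => RatFuncN.laurentMonomial K (lam j),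
    fun j => ⟨lam j, rfl⟩, hind, fun z => ?_⟩
  · rw [map_mul, map_mul]
    exact RatFuncN.mul_comm_of_mem_diagonalSubgroup ((hH₀ρ g).1 hg) ((hH₀ρ h).1 hh)
  rw [← hfix, IntermediateField.mem_fixedField_iff]
  constructor
  · rintro hz σ ⟨hσ, g, rfl⟩
    exact hz g ((hH₀ρ g).2 hσ)
  · exact fun hz g hg => hz (ρ g) ⟨(hH₀ρ g).1 hg, g, rfl⟩

theorem stmt_19 (K : Type*) [Field K] (n : ℕ)
    (G : Type*) [Group G] [Finite G]
    (x : Fin n → RatFuncN K n)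
    (hx : ∀ i, x i = algebraMap (MvPolynomial (Fin n) K) (RatFuncN K n) (MvPolynomial.X i))
    -- a faithful action of G on K(x₁,…,xₙ) by monomial K-automorphisms
    (ρ : G →* (RatFuncN K n ≃ₐ[K] RatFuncN K n)) (hρ : Function.Injective ρ)
    (m : G → Matrix (Fin n) (Fin n) ℤ) (a : G → Fin n → K)
    (ha : ∀ g j, a g j ≠ 0)
    (hm : ∀ g, IsUnit (m g).det)
    (hact : ∀ g j, ρ g (x j)
      = algebraMap K (RatFuncN K n) (a g j) * ∏ i, x i ^ (m g i j))
    -- H₀ is the kernel of the exponent-matrix homomorphism G → GLₙ(ℤ):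
    -- it consists of the elements acting by scaling each variable
    (H₀ : Set G)
    (hH₀ : H₀ = {g | ∀ j, ∃ c : K, c ≠ 0 ∧
      ρ g (x j) = algebraMap K (RatFuncN K n) c * x j}) :
    -- H₀ is abelian, and its fixed field is K(M₁,…,Mₙ) for algebraically
    -- independent power products M₁,…,Mₙ in x₁,…,xₙ
    (∀ g ∈ H₀, ∀ h ∈ H₀, g * h = h * g) ∧
    ∃ M : Fin n → RatFuncN K n,
      (∀ j, ∃ lam : Fin n → ℤ, M j = ∏ i, x i ^ (lam i)) ∧
      AlgebraicIndependent K M ∧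
      ∀ z : RatFuncN K n,
        (∀ g ∈ H₀, ρ g z = z) ↔ z ∈ IntermediateField.adjoin K (Set.range M) :=
  stmt_19_general K n G x hx ρ hρ H₀ hH₀
end
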